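/- arXiv:2204.04479 — 9 statements merged into one kernel-verified Lean document; each statement's English description precedes it below -/
import Mathlib

section
/- For every positive integer k, the set of consecutive integers {1, 2, ..., 4k+2} can be partitioned into 2k+1 pairs such that the set of pair sums is exactly the set of 2k+1 consecutive integers {3k+3, 3k+4, ..., 5k+3}. -/
/-!
Pair `i ∈ [0, 2k]` gets the sum `3k + 3 + i`. For `i ≤ k` it joins the odd number `2i + 1` with
`3k + 2 - i`; for `k < i` it joins the even number `2(i - k)` with `5k + 3 - i`. The first
elements run through `[1, 2k + 1]` and the second ones through `[2k + 2, 4k + 2]`, each exactly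
once.
-/

open Finset

namespace Finset

variable {ι α : Type*} [DecidableEq α] {s : Finset ι} {f g : ι → α}

def pairFamily (s : Finset ι) (f g : ι → α) : Finset (Finset α) :=
  s.image fun i => {f i, g i}

section

variable (hf : Set.InjOn f s) (hg : Set.InjOn g s) (hfg : ∀ i ∈ s, ∀ j ∈ s, f i ≠ g j)
include hfg

lemma card_of_mem_pairFamily {p : Finset α} (hp : p ∈ pairFamily s f g) : p.card = 2 := by
  obtain ⟨i, hi, rfl⟩ := mem_image.mp hp
  exact card_pair (hfg i hi i hi)

include hf

lemma injOn_pair : Set.InjOn (fun i => ({f i, g i} : Finset α)) s := by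
  intro i hi j hj hij
  have hmem : f i ∈ ({f j, g j} : Finset α) := by
    rw [← show ({f i, g i} : Finset α) = {f j, g j} from hij]
    exact mem_insert_self _ _
  rcases mem_insert.mp hmem with h | h
  · exact hf hi hj h
  · exact absurd (mem_singleton.mp h) (hfg i hi j hj)

lemma card_pairFamily : (pairFamily s f g).card = s.card :=
  card_image_of_injOn (injOn_pair hf hfg)

include hg

lemma disjoint_of_mem_pairFamily {p q : Finset α} (hp : p ∈ pairFamily s f g)
    (hq : q ∈ pairFamily s f g) (hpq : p ≠ q) : Disjoint p q := by
  obtain ⟨i, hi, rfl⟩ := mem_image.mp hp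
  obtain ⟨j, hj, rfl⟩ := mem_image.mp hq
  have hij : i ≠ j := fun h => hpq (h ▸ rfl)
  rw [disjoint_left]
  intro x hxi hxj
  simp only [mem_insert, mem_singleton] at hxi hxj
  rcases hxi with rfl | rfl <;> rcases hxj with h | h
  · exact hij (hf hi hj h)
  · exact hfg i hi j hj h
  · exact hfg j hj i hi h.symm
  · exact hij (hg hi hj h)

lemma card_image_union_image : (s.image f ∪ s.image g).card = 2 * s.card := by
  have hdisj : Disjoint (s.image f) (s.image g) := by
    simp only [disjoint_left, mem_image]
    rintro _ ⟨i, hi, rfl⟩ ⟨j, hj, hji⟩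
    exact hfg i hi j hj hji.symm
  rw [card_union_of_disjoint hdisj, card_image_of_injOn hf, card_image_of_injOn hg]
  ring

end

lemma biUnion_pairFamily : (pairFamily s f g).biUnion id = s.image f ∪ s.image g := by
  rw [pairFamily, image_biUnion]
  ext x
  simp only [id, mem_biUnion, mem_union, mem_image, mem_insert, mem_singleton]
  constructor
  · rintro ⟨i, hi, rfl | rfl⟩
    exacts [Or.inl ⟨i, hi, rfl⟩, Or.inr ⟨i, hi, rfl⟩]
  · rintro (⟨i, hi, rfl⟩ | ⟨i, hi, rfl⟩)
    exacts [⟨i, hi, Or.inl rfl⟩, ⟨i, hi, Or.inr rfl⟩]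

lemma image_sum_pairFamily [AddCommMonoid α] (hfg : ∀ i ∈ s, f i ≠ g i) :
    (pairFamily s f g).image (fun p => p.sum id) = s.image fun i => f i + g i := by
  rw [pairFamily, image_image]
  exact image_congr fun i hi => sum_pair (hfg i hi)

end Finset

def pairMin (k i : ℕ) : ℤ := if i ≤ k then 2 * i + 1 else 2 * (i - k : ℤ)

def pairMax (k i : ℕ) : ℤ := if i ≤ k then 3 * k + 2 - i else 5 * k + 3 - i

section

variable {k i : ℕ}

lemma pairMin_mem_Icc (hi : i ∈ range (2 * k + 1)) :
    pairMin k i ∈ Icc (1 : ℤ) (2 * k + 1) := by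
  rw [mem_range] at hi
  rw [mem_Icc]; unfold pairMin; split <;> omega

lemma pairMax_mem_Icc (hi : i ∈ range (2 * k + 1)) :
    pairMax k i ∈ Icc (2 * k + 2 : ℤ) (4 * k + 2) := by
  rw [mem_range] at hi
  rw [mem_Icc]; unfold pairMax; split <;> omega

lemma pairMin_ne_pairMax :
    ∀ i ∈ range (2 * k + 1), ∀ j ∈ range (2 * k + 1), pairMin k i ≠ pairMax k j := by
  intro i hi j hj
  have h₁ := mem_Icc.mp (pairMin_mem_Icc hi)
  have h₂ := mem_Icc.mp (pairMax_mem_Icc hj)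
  omega

lemma pairMin_add_pairMax : pairMin k i + pairMax k i = 3 * k + 3 + i := by
  unfold pairMin pairMax; split <;> ring

lemma injOn_pairMin : Set.InjOn (pairMin k) (range (2 * k + 1)) := by
  intro i hi j hj h
  simp only [coe_range, Set.mem_Iio] at hi hj
  unfold pairMin at h; split at h <;> split at h <;> omega

lemma injOn_pairMax : Set.InjOn (pairMax k) (range (2 * k + 1)) := by
  intro i hi j hj h
  simp only [coe_range, Set.mem_Iio] at hi hj
  unfold pairMax at h; split at h <;> split at h <;> omega

end

lemma image_pairMin_union_image_pairMax (k : ℕ) :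
    (range (2 * k + 1)).image (pairMin k) ∪ (range (2 * k + 1)).image (pairMax k) =
      Icc (1 : ℤ) (4 * k + 2) := by
  refine eq_of_subset_of_card_le (union_subset ?_ ?_) ?_
  · exact image_subset_iff.mpr fun i hi => Icc_subset_Icc le_rfl (by omega) (pairMin_mem_Icc hi)
  · exact image_subset_iff.mpr fun i hi => Icc_subset_Icc (by omega) le_rfl (pairMax_mem_Icc hi)
  · rw [card_image_union_image injOn_pairMin injOn_pairMax pairMin_ne_pairMax, card_range,
      Int.card_Icc]
    omega

lemma image_add_range (c : ℤ) (n : ℕ) :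
    (range (n + 1)).image (fun i : ℕ => c + i) = Icc c (c + n) := by
  ext x
  simp only [mem_image, mem_range, mem_Icc]
  constructor
  · rintro ⟨i, hi, rfl⟩
    omega
  · intro hx
    exact ⟨(x - c).toNat, by omega, by omega⟩

theorem consecutive_pair_sums_4k_add_2_general (k : ℕ) :
    ∃ P : Finset (Finset ℤ),
      P.card = 2 * k + 1 ∧
      (∀ p ∈ P, p.card = 2) ∧
      (∀ p ∈ P, ∀ q ∈ P, p ≠ q → Disjoint p q) ∧
      P.biUnion id = Finset.Icc (1 : ℤ) (4 * (k : ℤ) + 2) ∧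
      P.image (fun p => p.sum id) = Finset.Icc (3 * (k : ℤ) + 3) (5 * (k : ℤ) + 3) := by
  have hfg := pairMin_ne_pairMax (k := k)
  refine ⟨pairFamily (range (2 * k + 1)) (pairMin k) (pairMax k), ?_,
    fun _ => card_of_mem_pairFamily hfg, fun _ hp _ hq =>
      disjoint_of_mem_pairFamily injOn_pairMin injOn_pairMax hfg hp hq, ?_, ?_⟩
  · rw [card_pairFamily injOn_pairMin hfg, card_range]
  · rw [biUnion_pairFamily, image_pairMin_union_image_pairMax]
  · rw [image_sum_pairFamily fun i hi => hfg i hi i hi]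
    simp_rw [pairMin_add_pairMax]
    convert image_add_range (3 * k + 3) (2 * k) using 2
    push_cast
    ring

/-- For every positive integer `k`, the set `{1, ..., 4k+2}` can be partitioned into
`2k+1` pairs such that the set of pair sums is exactly `{3k+3, ..., 5k+3}`. -/
theorem consecutive_pair_sums_4k_add_2 (k : ℕ) (hk : 0 < k) :
    ∃ P : Finset (Finset ℤ),
      P.card = 2 * k + 1 ∧
      (∀ p ∈ P, p.card = 2) ∧
      (∀ p ∈ P, ∀ q ∈ P, p ≠ q → Disjoint p q) ∧
      P.biUnion id = Finset.Icc (1 : ℤ) (4 * (k : ℤ) + 2) ∧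
      P.image (fun p => p.sum id) = Finset.Icc (3 * (k : ℤ) + 3) (5 * (k : ℤ) + 3) :=
  consecutive_pair_sums_4k_add_2_general k
end

section
/- For every positive integer k, the set of consecutive integers {1, 2, ..., 4k} can be partitioned into 2k pairs such that the set of pair sums is exactly the set of 2k−1 consecutive integers {3k+1, 3k+2, ..., 5k−1} together with the single additional value 6k. -/
/-- Small element of the `j`-th pair. -/
def pairLow (k j : ℕ) : ℤ := if j = 0 then 2*k else j

/-- Large element of the `j`-th pair. -/
def pairHigh (k j : ℕ) : ℤ := if j = 0 then 4*k else if j < k then j + 3*k else j + k + 1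

/-- The `j`-th pair. -/
def pairSet (k j : ℕ) : Finset ℤ := {pairLow k j, pairHigh k j}

lemma mem_pairSet {k j : ℕ} {x : ℤ} :
    x ∈ pairSet k j ↔ x = pairLow k j ∨ x = pairHigh k j := by
  simp [pairSet]

lemma pairLow_range (k j : ℕ) (hk : 0 < k) (hj : j < 2*k) :
    1 ≤ pairLow k j ∧ pairLow k j ≤ 2*k := by
  unfold pairLow; split_ifs <;> omega

lemma pairHigh_range (k j : ℕ) (hk : 0 < k) (hj : j < 2*k) :
    2*k + 1 ≤ pairHigh k j ∧ pairHigh k j ≤ 4*k := by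
  unfold pairHigh; split_ifs <;> omega

lemma pairLow_lt_pairHigh (k j : ℕ) (hk : 0 < k) (hj : j < 2*k) :
    pairLow k j < pairHigh k j := by
  have := pairLow_range k j hk hj
  have := pairHigh_range k j hk hj
  omega

lemma pairLow_inj (k : ℕ) {j₁ j₂ : ℕ} (h₁ : j₁ < 2*k) (h₂ : j₂ < 2*k)
    (h : pairLow k j₁ = pairLow k j₂) : j₁ = j₂ := by
  unfold pairLow at h; split_ifs at h <;> omega

lemma pairHigh_inj (k : ℕ) {j₁ j₂ : ℕ} (h₁ : j₁ < 2*k) (h₂ : j₂ < 2*k)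
    (h : pairHigh k j₁ = pairHigh k j₂) : j₁ = j₂ := by
  unfold pairHigh at h; split_ifs at h <;> omega

lemma pairSet_sum (k j : ℕ) (hk : 0 < k) (hj : j < 2*k) :
    (pairSet k j).sum id = pairLow k j + pairHigh k j := by
  have := pairLow_lt_pairHigh k j hk hj
  unfold pairSet
  rw [Finset.sum_pair (by omega)]; rfl

/-- For every positive integer `k`, the set `{1, ..., 4k}` can be partitioned into `2k`
pairs such that the set of pair sums is exactly `{3k+1, ..., 5k-1} ∪ {6k}`. -/
theorem pair_sums_4k_consecutive_with_jump (k : ℕ) (hk : 0 < k) :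
    ∃ P : Finset (Finset ℤ),
      P.card = 2 * k ∧
      (∀ p ∈ P, p.card = 2) ∧
      (∀ p ∈ P, ∀ q ∈ P, p ≠ q → Disjoint p q) ∧
      P.biUnion id = Finset.Icc (1 : ℤ) (4 * (k : ℤ)) ∧
      P.image (fun p => p.sum id) =
        Finset.Icc (3 * (k : ℤ) + 1) (5 * (k : ℤ) - 1) ∪ {6 * (k : ℤ)} := by
  classical
  have hfinj : ∀ j₁ < 2*k, ∀ j₂ < 2*k, pairSet k j₁ = pairSet k j₂ → j₁ = j₂ := by
    intro j₁ h₁ j₂ h₂ h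
    have hm : pairLow k j₁ ∈ pairSet k j₂ := by rw [← h]; exact mem_pairSet.mpr (Or.inl rfl)
    have hm' : pairLow k j₂ ∈ pairSet k j₁ := by rw [h]; exact mem_pairSet.mpr (Or.inl rfl)
    rw [mem_pairSet] at hm hm'
    rcases hm with h' | h'
    · exact pairLow_inj k h₁ h₂ h'
    · rcases hm' with h'' | h''
      · exact pairLow_inj k h₁ h₂ h''.symm
      · have := pairLow_lt_pairHigh k j₁ hk h₁
        have := pairLow_lt_pairHigh k j₂ hk h₂
        omega
  refine ⟨(Finset.range (2*k)).image (pairSet k), ?_, ?_, ?_, ?_, ?_⟩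
  · rw [Finset.card_image_of_injOn, Finset.card_range]
    intro j₁ h₁ j₂ h₂ h
    exact hfinj j₁ (Finset.mem_range.mp h₁) j₂ (Finset.mem_range.mp h₂) h
  · intro p hp
    simp only [Finset.mem_image, Finset.mem_range] at hp
    obtain ⟨j, hj, rfl⟩ := hp
    have := pairLow_lt_pairHigh k j hk hj
    unfold pairSet
    rw [Finset.card_insert_of_notMem (by simp; omega), Finset.card_singleton]
  · intro p hp q hq hne
    simp only [Finset.mem_image, Finset.mem_range] at hp hq
    obtain ⟨j₁, h₁, rfl⟩ := hp
    obtain ⟨j₂, h₂, rfl⟩ := hq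
    have hjne : j₁ ≠ j₂ := fun h => hne (by rw [h])
    rw [Finset.disjoint_left]
    intro a ha ha'
    rw [mem_pairSet] at ha ha'
    have r1 := pairLow_range k j₁ hk h₁
    have r2 := pairLow_range k j₂ hk h₂
    have r3 := pairHigh_range k j₁ hk h₁
    have r4 := pairHigh_range k j₂ hk h₂
    rcases ha with rfl | rfl <;> rcases ha' with h' | h'
    · exact hjne (pairLow_inj k h₁ h₂ h')
    · omega
    · omega
    · exact hjne (pairHigh_inj k h₁ h₂ h')
  · ext x
    simp only [Finset.mem_biUnion, Finset.mem_image, Finset.mem_range, id_eq,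
      Finset.mem_Icc]
    constructor
    · rintro ⟨p, ⟨j, hj, rfl⟩, hx⟩
      have r1 := pairLow_range k j hk hj
      have r2 := pairHigh_range k j hk hj
      rw [mem_pairSet] at hx
      rcases hx with rfl | rfl <;> omega
    · rintro ⟨hx1, hx2⟩
      by_cases hx2k : x ≤ 2*(k:ℤ)
      · by_cases he : x = 2*(k:ℤ)
        · refine ⟨pairSet k 0, ⟨0, by omega, rfl⟩, mem_pairSet.mpr (Or.inl ?_)⟩
          simp [pairLow, he]
        · refine ⟨pairSet k x.toNat, ⟨x.toNat, by omega, rfl⟩,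
            mem_pairSet.mpr (Or.inl ?_)⟩
          unfold pairLow; rw [if_neg (by omega)]; omega
      · by_cases hx3k : x ≤ 3*(k:ℤ)
        · refine ⟨pairSet k (x - k - 1).toNat, ⟨(x-k-1).toNat, by omega, rfl⟩,
            mem_pairSet.mpr (Or.inr ?_)⟩
          unfold pairHigh
          rw [if_neg (by omega), if_neg (by omega)]; omega
        · by_cases he : x = 4*(k:ℤ)
          · refine ⟨pairSet k 0, ⟨0, by omega, rfl⟩, mem_pairSet.mpr (Or.inr ?_)⟩
            simp [pairHigh, he]
          · refine ⟨pairSet k (x - 3*k).toNat, ⟨(x-3*k).toNat, by omega, rfl⟩,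
              mem_pairSet.mpr (Or.inr ?_)⟩
            unfold pairHigh
            rw [if_neg (by omega), if_pos (by omega)]; omega
  · ext y
    simp only [Finset.mem_image, Finset.mem_union, Finset.mem_Icc, Finset.mem_singleton,
      Finset.mem_range]
    constructor
    · rintro ⟨p, ⟨j, hj, rfl⟩, rfl⟩
      rw [pairSet_sum k j hk hj]
      unfold pairLow pairHigh
      split_ifs <;> omega
    · rintro (⟨hy1, hy2⟩ | rfl)
      · by_cases hpar : (y - 3*(k:ℤ)) % 2 = 0
        · refine ⟨pairSet k ((y - 3*k)/2).toNat, ⟨((y-3*k)/2).toNat, by omega, rfl⟩, ?_⟩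
          rw [pairSet_sum k _ hk (by omega)]
          unfold pairLow pairHigh
          rw [if_neg (by omega), if_neg (by omega), if_pos (by omega)]; omega
        · refine ⟨pairSet k ((y - k - 1)/2).toNat, ⟨((y-k-1)/2).toNat, by omega, rfl⟩, ?_⟩
          rw [pairSet_sum k _ hk (by omega)]
          unfold pairLow pairHigh
          rw [if_neg (by omega), if_neg (by omega), if_neg (by omega)]; omega
      · refine ⟨pairSet k 0, ⟨0, by omega, rfl⟩, ?_⟩
        rw [pairSet_sum k 0 hk (by omega)]
        unfold pairLow pairHigh
        simp; ring
end

section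
/- Let k be a positive integer and let m ≤ n be integers with n − m + 1 = 4k. Then there does not exist a partition of the set of consecutive integers [m,n] into 2k pairs such that the multiset of the 2k pair sums consists of 2k consecutive integers a, a+1, ..., a+2k−1 for some integer a. -/
lemma Icc_int_succ_right (a b : ℤ) (h : a ≤ b + 1) :
    Finset.Icc a (b + 1) = insert (b + 1) (Finset.Icc a b) := by
  ext x
  simp only [Finset.mem_Icc, Finset.mem_insert]
  omega

lemma sum_Icc_int (N : ℕ) (a : ℤ) :
    2 * ((Finset.Icc a (a + N)).sum id) = (2 * a + N) * (N + 1) := by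
  induction N with
  | zero => simp
  | succ N ih =>
      have h : a ≤ (a + (N : ℤ)) + 1 := by omega
      have he : (a + (N + 1 : ℕ) : ℤ) = (a + N) + 1 := by push_cast; ring
      rw [he, Icc_int_succ_right a (a + N) h, Finset.sum_insert (by simp)]
      push_cast
      simp only [id] at ih ⊢
      linarith

/-- For `m ≤ n` with `n - m + 1 = 4k` (`k ≥ 1`), there is no partition of `[m,n]` into
`2k` pairs whose multiset of pair sums consists of `2k` consecutive integers. -/
theorem no_consecutive_pair_sums_interval_4k (k : ℕ) (hk : 0 < k)
    (m n : ℤ) (hmn : m ≤ n) (hcard : n - m + 1 = 4 * (k : ℤ)) :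
    ¬ ∃ (P : Finset (Finset ℤ)) (a : ℤ),
        P.card = 2 * k ∧
        (∀ p ∈ P, p.card = 2) ∧
        (∀ p ∈ P, ∀ q ∈ P, p ≠ q → Disjoint p q) ∧
        P.biUnion id = Finset.Icc m n ∧
        P.val.map (fun p => p.sum id) = (Finset.Icc a (a + 2 * (k : ℤ) - 1)).val := by
  rintro ⟨P, a, hcardP, h2, hdisj, hunion, hmap⟩
  have hpd : (↑P : Set (Finset ℤ)).PairwiseDisjoint id := by
    intro p hp q hq hne
    exact hdisj p hp q hq hne
  have hs1 : ∑ p ∈ P, (p.sum id) = (Finset.Icc m n).sum id := by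
    rw [← hunion, Finset.sum_biUnion hpd]
    simp [id]
  have hs2 : ∑ p ∈ P, (p.sum id) = (Finset.Icc a (a + 2 * (k : ℤ) - 1)).sum id := by
    have h := congrArg Multiset.sum hmap
    have h1 : ∑ p ∈ P, (p.sum id) = (P.val.map (fun p => p.sum id)).sum := rfl
    have h2' : (Finset.Icc a (a + 2 * (k : ℤ) - 1)).sum id
        = ((Finset.Icc a (a + 2 * (k : ℤ) - 1)).val.map id).sum := rfl
    rw [Multiset.map_id] at h2'
    rw [h1, h, h2']
  have hN1 : ((4 * k - 1 : ℕ) : ℤ) = 4 * (k : ℤ) - 1 := by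
    have : 1 ≤ 4 * k := by omega
    push_cast [this]; ring
  have hN2 : ((2 * k - 1 : ℕ) : ℤ) = 2 * (k : ℤ) - 1 := by
    have : 1 ≤ 2 * k := by omega
    push_cast [this]; ring
  have L1 := sum_Icc_int (4 * k - 1) m
  have L2 := sum_Icc_int (2 * k - 1) a
  rw [hN1] at L1
  rw [hN2] at L2
  rw [show m + (4 * (k:ℤ) - 1) = n by omega] at L1
  rw [show a + (2 * (k:ℤ) - 1) = a + 2 * (k:ℤ) - 1 by ring] at L2
  have key : (2 * m + (4 * (k:ℤ) - 1)) * (4 * (k:ℤ) - 1 + 1)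
      = (2 * a + (2 * (k:ℤ) - 1)) * (2 * (k:ℤ) - 1 + 1) := by
    rw [← L1, ← L2, hs1.symm.trans hs2]
  have hk' : (0:ℤ) < (k : ℤ) := by exact_mod_cast hk
  have h0 : 2 * (k:ℤ) * ((2 * m + (4 * (k:ℤ) - 1)) * 2 - (2 * a + (2 * (k:ℤ) - 1))) = 0 := by
    linear_combination key
  have h1 : (2 * m + (4 * (k:ℤ) - 1)) * 2 - (2 * a + (2 * (k:ℤ) - 1)) = 0 := by
    rcases mul_eq_zero.mp h0 with h | h
    · exfalso; omega
    · exact h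
  omega
end

section
/- Let k be a positive integer and let m ≤ n be integers with n − m + 1 = 4k+2. Then the set of consecutive integers [m,n] can be partitioned into 2k+1 pairs such that the set of pair sums is exactly the set of 2k+1 consecutive integers {m+n−k, m+n−k+1, ..., m+n+k}. -/
/-!
Index the pairs by `j ∈ [0, 2k]` and first partition `[0, 4k+1]`: the `j`-th pair is
`{2j mod (2k+1), 2k+1 + (k - j) mod (2k+1)}`. Since `2` is invertible modulo `2k+1`, the first
entries run through `[0, 2k]` and the second through `[2k+1, 4k+1]`, and the pair sum is
`3k+1+j`. Translating by `m` gives the partition of `[m, n]`.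
-/

open Finset

namespace Finset

variable {ι α : Type*} [DecidableEq α] {I : Finset ι} {a b : ι → α}

theorem ne_of_disjoint_image (hab : Disjoint (I.image a) (I.image b)) {i j : ι} (hi : i ∈ I)
    (hj : j ∈ I) : a i ≠ b j :=
  fun h => disjoint_left.mp hab (mem_image_of_mem a hi) (h ▸ mem_image_of_mem b hj)

theorem disjoint_pairs_of_ne (ha : Set.InjOn a I) (hb : Set.InjOn b I)
    (hab : Disjoint (I.image a) (I.image b)) {i j : ι} (hi : i ∈ I) (hj : j ∈ I) (hij : i ≠ j) :
    Disjoint ({a i, b i} : Finset α) {a j, b j} := by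
  simp only [disjoint_insert_left, disjoint_insert_right, mem_insert, mem_singleton,
    disjoint_singleton, not_or]
  exact ⟨⟨fun h => hij (ha hi hj h.symm), ne_of_disjoint_image hab hj hi⟩,
    ne_of_disjoint_image hab hi hj, fun h => hij (hb hi hj h)⟩

theorem exists_pairs_of_injOn [AddCommMonoid α] (ha : Set.InjOn a I) (hb : Set.InjOn b I)
    (hab : Disjoint (I.image a) (I.image b)) :
    ∃ P : Finset (Finset α),
      P.card = I.card ∧
      (∀ p ∈ P, p.card = 2) ∧
      (∀ p ∈ P, ∀ q ∈ P, p ≠ q → Disjoint p q) ∧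
      P.biUnion id = I.image a ∪ I.image b ∧
      P.image (fun p => p.sum id) = I.image (fun j => a j + b j) := by
  have hne {j} (hj : j ∈ I) : a j ≠ b j := ne_of_disjoint_image hab hj hj
  have hinj : Set.InjOn (fun j => ({a j, b j} : Finset α)) I := fun i hi j hj h => by
    by_contra hij
    have hdisj := disjoint_pairs_of_ne ha hb hab hi hj hij
    rw [← show ({a i, b i} : Finset α) = {a j, b j} from h, disjoint_self_iff_empty] at hdisj
    exact insert_ne_empty _ _ hdisj
  refine ⟨I.image fun j => {a j, b j}, card_image_of_injOn hinj, ?_, ?_, ?_, ?_⟩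
  · simp only [mem_image, forall_exists_index, and_imp, forall_apply_eq_imp_iff₂]
    exact fun j hj => card_pair (hne hj)
  · simp only [mem_image, forall_exists_index, and_imp, forall_apply_eq_imp_iff₂]
    exact fun i hi j hj h => disjoint_pairs_of_ne ha hb hab hi hj (fun hij => h (hij ▸ rfl))
  · ext x
    simp only [image_biUnion, mem_biUnion, id, mem_insert, mem_singleton,
      mem_union, mem_image, and_or_left, exists_or, eq_comm]
  · rw [image_image]
    exact image_congr fun j hj => sum_pair (hne hj)

end Finset

namespace PairSums

/-- `low K j = 2j mod (2K+1)` and `high K j = 2K+1 + (K - j) mod (2K+1)` for `j ∈ [0, 2K]`. -/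
def low (K j : ℤ) : ℤ := if j ≤ K then 2 * j else 2 * j - (2 * K + 1)

def high (K j : ℤ) : ℤ := if j ≤ K then 3 * K + 1 - j else 5 * K + 2 - j

variable (K : ℤ)

theorem low_add_high (j : ℤ) : low K j + high K j = 3 * K + 1 + j := by
  unfold low high; split_ifs <;> ring

theorem injOn_low : Set.InjOn (low K) (Icc 0 (2 * K)) := by
  intro i hi j hj h
  simp only [coe_Icc, Set.mem_Icc, low] at hi hj h
  split_ifs at h <;> omega

theorem injOn_high : Set.InjOn (high K) (Icc 0 (2 * K)) := by
  intro i hi j hj h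
  simp only [coe_Icc, Set.mem_Icc, high] at hi hj h
  split_ifs at h <;> omega

theorem image_low : (Icc 0 (2 * K)).image (low K) = Icc 0 (2 * K) := by
  ext x
  simp only [mem_image, mem_Icc, low]
  constructor
  · rintro ⟨j, hj, rfl⟩
    split_ifs <;> omega
  · intro hx
    refine ⟨if x % 2 = 0 then x / 2 else (x + 2 * K + 1) / 2, ?_⟩
    split_ifs <;> omega

theorem image_high : (Icc 0 (2 * K)).image (high K) = Icc (2 * K + 1) (4 * K + 1) := by
  ext x
  simp only [mem_image, mem_Icc, high]
  constructor
  · rintro ⟨j, hj, rfl⟩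
    split_ifs <;> omega
  · intro hx
    refine ⟨if x ≤ 3 * K + 1 then 3 * K + 1 - x else 5 * K + 2 - x, ?_⟩
    split_ifs <;> omega

theorem image_translate_low (m : ℤ) :
    (Icc 0 (2 * K)).image ((m + ·) ∘ low K) = Icc m (m + 2 * K) := by
  rw [← image_image, image_low, image_add_left_Icc, add_zero]

theorem image_translate_high (m : ℤ) :
    (Icc 0 (2 * K)).image ((m + ·) ∘ high K) = Icc (m + (2 * K + 1)) (m + (4 * K + 1)) := by
  rw [← image_image, image_high, image_add_left_Icc]

theorem image_translate_low_add_high (m : ℤ) :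
    (Icc 0 (2 * K)).image (fun j => ((m + ·) ∘ low K) j + ((m + ·) ∘ high K) j) =
      Icc (2 * m + 3 * K + 1) (2 * m + 5 * K + 1) := by
  have hsum (j : ℤ) : ((m + ·) ∘ low K) j + ((m + ·) ∘ high K) j = (2 * m + 3 * K + 1) + j := by
    simp only [Function.comp_apply]; linarith [low_add_high K j]
  simp only [hsum, image_add_left_Icc]
  congr 1 <;> ring

end PairSums

open PairSums in
theorem pair_sums_interval_4k_add_2_consecutive_general (k : ℕ)
    (m n : ℤ) (hcard : n - m + 1 = 4 * (k : ℤ) + 2) :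
    ∃ P : Finset (Finset ℤ),
      P.card = 2 * k + 1 ∧
      (∀ p ∈ P, p.card = 2) ∧
      (∀ p ∈ P, ∀ q ∈ P, p ≠ q → Disjoint p q) ∧
      P.biUnion id = Finset.Icc m n ∧
      P.image (fun p => p.sum id) = Finset.Icc (m + n - (k : ℤ)) (m + n + (k : ℤ)) := by
  have hdisj : Disjoint ((Icc 0 (2 * (k : ℤ))).image ((m + ·) ∘ low k))
      ((Icc 0 (2 * (k : ℤ))).image ((m + ·) ∘ high k)) := by
    rw [image_translate_low, image_translate_high, disjoint_left]
    intro x hx hx'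
    rw [mem_Icc] at hx hx'
    omega
  obtain ⟨P, hPcard, hP2, hPdisj, hPunion, hPsums⟩ := exists_pairs_of_injOn
    ((add_right_injective m).comp_injOn (injOn_low k))
    ((add_right_injective m).comp_injOn (injOn_high k)) hdisj
  refine ⟨P, ?_, hP2, hPdisj, ?_, ?_⟩
  · rw [hPcard, Int.card_Icc]; omega
  · rw [hPunion, image_translate_low, image_translate_high]
    ext x
    simp only [mem_union, mem_Icc]
    omega
  · rw [hPsums, image_translate_low_add_high]
    congr 1 <;> omega

/-- For `m ≤ n` with `n - m + 1 = 4k+2` (`k ≥ 1`), the set `[m,n]` can be partitioned into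
`2k+1` pairs such that the set of pair sums is exactly `{m+n-k, ..., m+n+k}`. -/
theorem pair_sums_interval_4k_add_2_consecutive (k : ℕ) (hk : 0 < k)
    (m n : ℤ) (hmn : m ≤ n) (hcard : n - m + 1 = 4 * (k : ℤ) + 2) :
    ∃ P : Finset (Finset ℤ),
      P.card = 2 * k + 1 ∧
      (∀ p ∈ P, p.card = 2) ∧
      (∀ p ∈ P, ∀ q ∈ P, p ≠ q → Disjoint p q) ∧
      P.biUnion id = Finset.Icc m n ∧
      P.image (fun p => p.sum id) = Finset.Icc (m + n - (k : ℤ)) (m + n + (k : ℤ)) :=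
  pair_sums_interval_4k_add_2_consecutive_general k m n hcard
end

section
/- For every positive integer n, the set of consecutive integers {1, 2, ..., 3n} can be partitioned into n triples (3-element subsets) such that the set of triple sums is exactly the set of n consecutive integers {4n+2, 4n+3, ..., 5n+1}. -/
/-- For every positive integer `n`, the set `{1, ..., 3n}` can be partitioned into `n`
triples such that the set of triple sums is exactly `{4n+2, ..., 5n+1}`. -/
theorem consecutive_triple_sums (n : ℕ) (hn : 0 < n) :
    ∃ P : Finset (Finset ℤ),
      P.card = n ∧
      (∀ p ∈ P, p.card = 3) ∧
      (∀ p ∈ P, ∀ q ∈ P, p ≠ q → Disjoint p q) ∧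
      P.biUnion id = Finset.Icc (1 : ℤ) (3 * (n : ℤ)) ∧
      P.image (fun p => p.sum id) = Finset.Icc (4 * (n : ℤ) + 2) (5 * (n : ℤ) + 1) := by
  have hn' : (1 : ℤ) ≤ (n : ℤ) := by exact_mod_cast hn
  set f : ℤ → Finset ℤ := fun i => ({i, (n : ℤ) + i, 3 * (n : ℤ) + 1 - i} : Finset ℤ) with hf
  refine ⟨(Finset.Icc (1 : ℤ) (n : ℤ)).image f, ?_, ?_, ?_, ?_, ?_⟩
  · -- card
    rw [Finset.card_image_of_injOn, Int.card_Icc]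
    · omega
    · intro i hi j hj hij
      simp only [Finset.coe_Icc, Set.mem_Icc] at hi hj
      have : i ∈ f j := by rw [← hij, hf]; simp
      have : j ∈ f i := by rw [hij, hf]; simp
      simp only [hf, Finset.mem_insert, Finset.mem_singleton] at *
      omega
  · -- card 3
    intro p hp
    simp only [Finset.mem_image, Finset.mem_Icc] at hp
    obtain ⟨i, hi, rfl⟩ := hp
    rw [hf]
    rw [Finset.card_insert_of_notMem, Finset.card_insert_of_notMem, Finset.card_singleton]
    · simp only [Finset.mem_singleton]; omega
    · simp only [Finset.mem_insert, Finset.mem_singleton]; push_neg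
      constructor <;> omega
  · -- disjoint
    intro p hp q hq hpq
    simp only [Finset.mem_image, Finset.mem_Icc] at hp hq
    obtain ⟨i, hi, rfl⟩ := hp
    obtain ⟨j, hj, rfl⟩ := hq
    have hij : i ≠ j := fun h => hpq (by rw [h])
    rw [Finset.disjoint_left]
    intro a ha hb
    simp only [hf, Finset.mem_insert, Finset.mem_singleton] at ha hb
    omega
  · -- union
    ext x
    simp only [Finset.mem_biUnion, Finset.mem_image, Finset.mem_Icc, id]
    constructor
    · rintro ⟨p, ⟨i, hi, rfl⟩, hx⟩
      simp only [hf, Finset.mem_insert, Finset.mem_singleton] at hx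
      omega
    · rintro ⟨h1, h2⟩
      by_cases hc1 : x ≤ (n : ℤ)
      · exact ⟨f x, ⟨x, ⟨h1, hc1⟩, rfl⟩, by simp [hf]⟩
      · by_cases hc2 : x ≤ 2 * (n : ℤ)
        · refine ⟨f (x - n), ⟨x - n, ⟨by omega, by omega⟩, rfl⟩, ?_⟩
          simp only [hf, Finset.mem_insert, Finset.mem_singleton]
          omega
        · refine ⟨f (3 * n + 1 - x), ⟨3 * n + 1 - x, ⟨by omega, by omega⟩, rfl⟩, ?_⟩
          simp only [hf, Finset.mem_insert, Finset.mem_singleton]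
          omega
  · -- sums
    have hsum : ∀ i : ℤ, 1 ≤ i → i ≤ (n : ℤ) → (f i).sum id = 4 * (n : ℤ) + 1 + i := by
      intro i h1 h2
      rw [hf]
      rw [Finset.sum_insert, Finset.sum_insert, Finset.sum_singleton]
      · simp only [id]; ring
      · simp only [Finset.mem_singleton]; omega
      · simp only [Finset.mem_insert, Finset.mem_singleton]; push_neg
        constructor <;> omega
    ext s
    simp only [Finset.mem_image, Finset.mem_Icc]
    constructor
    · rintro ⟨p, ⟨i, hi, rfl⟩, rfl⟩
      rw [hsum i hi.1 hi.2]
      omega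
    · rintro ⟨h1, h2⟩
      refine ⟨f (s - 4 * n - 1), ⟨s - 4 * n - 1, ?_, rfl⟩, ?_⟩
      · exact ⟨by omega, by omega⟩
      · rw [hsum (s - 4 * n - 1) (by omega) (by omega)]; ring
end

section
/- For every odd integer t ≥ 3, every positive integer n, and every integer m, the set of tn consecutive integers {m, m+1, ..., m+tn−1} can be partitioned into n pairwise disjoint t-element subsets such that the set of the n subset sums consists of n consecutive integers a, a+1, ..., a+n−1 for some integer a. -/
/-!
Write `t = 2k + 1` and cut `{m, …, m + tn - 1}` into `t` blocks of `n` consecutive integers.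
The `i`-th part takes the `i`-th smallest element of each even-numbered block and the `i`-th
largest element of each odd-numbered block, i.e. the parts are the rows of the `n × t` array
filled in boustrophedon order. Passing from row `i` to row `i + 1`, the `k + 1` even-numbered
entries each increase by one and the `k` odd-numbered entries each decrease by one, so
consecutive row sums differ by exactly one.
-/

open Finset Function

section Rows

variable {ι κ α : Type*} [Fintype ι] [Fintype κ] [DecidableEq α]

def rowFinsets (f : ι → κ → α) : Finset (Finset α) :=
  univ.image fun i => univ.image (f i)

variable {f : ι → κ → α}

theorem card_of_mem_rowFinsets (hf : Injective (uncurry f)) {p : Finset α}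
    (hp : p ∈ rowFinsets f) :
    p.card = Fintype.card κ := by
  obtain ⟨i, -, rfl⟩ := mem_image.1 hp
  exact card_image_of_injective _ fun j j' h => congrArg Prod.snd (@hf (i, j) (i, j') h)

theorem disjoint_of_mem_rowFinsets (hf : Injective (uncurry f)) {p q : Finset α}
    (hp : p ∈ rowFinsets f) (hq : q ∈ rowFinsets f) (hpq : p ≠ q) : Disjoint p q := by
  obtain ⟨i, -, rfl⟩ := mem_image.1 hp
  obtain ⟨i', -, rfl⟩ := mem_image.1 hq
  refine disjoint_left.2 fun x hx hx' => hpq ?_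
  obtain ⟨j, -, rfl⟩ := mem_image.1 hx
  obtain ⟨j', -, hj⟩ := mem_image.1 hx'
  obtain rfl : i' = i := congrArg Prod.fst (@hf (i', j') (i, j) hj)
  rfl

theorem card_rowFinsets [Nonempty κ] (hf : Injective (uncurry f)) :
    (rowFinsets f).card = Fintype.card ι := by
  refine card_image_of_injective _ fun i i' h => ?_
  obtain ⟨j⟩ := ‹Nonempty κ›
  obtain ⟨j', -, hj⟩ := mem_image.1 (h ▸ mem_image_of_mem (f i) (mem_univ j))
  exact congrArg Prod.fst (@hf (i', j') (i, j) hj).symm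

theorem biUnion_rowFinsets : (rowFinsets f).biUnion id = univ.image (uncurry f) := by
  ext x
  simp [rowFinsets]

theorem image_sum_rowFinsets [AddCommMonoid α] (hf : Injective (uncurry f)) :
    (rowFinsets f).image (fun p => p.sum id) = univ.image fun i => ∑ j, f i j := by
  rw [rowFinsets, image_image]
  refine image_congr fun i _ => ?_
  exact sum_image fun j _ j' _ h => congrArg Prod.snd (@hf (i, j) (i, j') h)

end Rows

def boustrophedon (t n : ℕ) : Fin t × Fin n ≃ Fin (t * n) :=
  (Equiv.prodShear (Equiv.refl (Fin t)) fun b =>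
    if Odd (b : ℕ) then Fin.revPerm else Equiv.refl _).trans finProdFinEquiv

theorem boustrophedon_apply {t n : ℕ} (b : Fin t) (i : Fin n) :
    (boustrophedon t n (b, i) : ℤ) = n * b + if Odd (b : ℕ) then (n : ℤ) - 1 - i else i := by
  simp only [boustrophedon, Equiv.trans_apply, Equiv.prodShear_apply, finProdFinEquiv_apply_val,
    apply_ite (fun e : Equiv.Perm (Fin n) => e i), Fin.revPerm_apply, Equiv.refl_apply]
  split_ifs
  · have := i.isLt
    push_cast [Fin.val_rev]
    omega
  · push_cast
    ring

theorem sum_boustrophedon_column (k n : ℕ) (i : Fin n) :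
    ∑ b : Fin (2 * k + 1), (boustrophedon (2 * k + 1) n (b, i) : ℤ) =
      n * k * (2 * k + 1) + k * (n - 1) + i := by
  simp_rw [boustrophedon_apply]
  rw [Fin.sum_univ_eq_sum_range (fun b => (n : ℤ) * b + if Odd b then (n : ℤ) - 1 - i else i)]
  induction k with
  | zero => simp
  | succ k ih =>
    have h_odd : Odd (2 * k + 1) := odd_two_mul_add_one k
    have h_even : ¬Odd (2 * k + 1 + 1) := Nat.not_odd_iff_even.2 ⟨k + 1, by ring⟩
    rw [show 2 * (k + 1) + 1 = 2 * k + 1 + 1 + 1 by ring, sum_range_succ, sum_range_succ, ih,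
      if_pos h_odd, if_neg h_even]
    push_cast
    ring

theorem image_fin_add_eq_Icc (m : ℤ) (N : ℕ) :
    univ.image (fun y : Fin N => m + y) = Icc m (m + N - 1) := by
  ext x
  simp only [mem_image, mem_univ, true_and, mem_Icc]
  constructor
  · rintro ⟨y, rfl⟩
    have := y.isLt
    omega
  · rintro ⟨h₁, h₂⟩
    exact ⟨⟨(x - m).toNat, by omega⟩, by simp only [Int.ofNat_toNat]; omega⟩

theorem consecutive_tuple_sums_of_odd_general (t n : ℕ) (htodd : Odd t) (m : ℤ) :
    ∃ (P : Finset (Finset ℤ)) (a : ℤ),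
      P.card = n ∧
      (∀ p ∈ P, p.card = t) ∧
      (∀ p ∈ P, ∀ q ∈ P, p ≠ q → Disjoint p q) ∧
      P.biUnion id = Finset.Icc m (m + (t : ℤ) * (n : ℤ) - 1) ∧
      P.image (fun p => p.sum id) = Finset.Icc a (a + (n : ℤ) - 1) := by
  obtain ⟨k, rfl⟩ := htodd
  set e := boustrophedon (2 * k + 1) n
  set f : Fin n → Fin (2 * k + 1) → ℤ := fun i b => m + e (b, i)
  have hf_eq : uncurry f = (fun y : Fin ((2 * k + 1) * n) => m + y) ∘ e ∘ Prod.swap := rfl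
  have hf : Injective (uncurry f) := by
    rw [hf_eq]
    exact ((add_right_injective m).comp (Int.ofNat_injective.comp Fin.val_injective)).comp
      (e.injective.comp Prod.swap_injective)
  set a : ℤ := (2 * k + 1) * m + n * k * (2 * k + 1) + k * (n - 1)
  have h_row_sum (i : Fin n) : ∑ b, f i b = a + i := by
    simp only [f, e, sum_add_distrib, sum_boustrophedon_column, sum_const, card_univ,
      Fintype.card_fin, nsmul_eq_mul]
    push_cast
    ring
  refine ⟨rowFinsets f, a, (card_rowFinsets hf).trans (Fintype.card_fin n),
    fun p hp => (card_of_mem_rowFinsets hf hp).trans (Fintype.card_fin _),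
    fun p hp q hq => disjoint_of_mem_rowFinsets hf hp hq, ?_, ?_⟩
  · rw [biUnion_rowFinsets, hf_eq, ← image_image,
      image_univ_of_surjective (e.surjective.comp Prod.swap_surjective), image_fin_add_eq_Icc,
      Nat.cast_mul]
  · simp_rw [image_sum_rowFinsets hf, h_row_sum, image_fin_add_eq_Icc]

/-- For every odd `t ≥ 3`, every `n ≥ 1` and every integer `m`, the set of `t*n`
consecutive integers `{m, ..., m+t*n-1}` can be partitioned into `n` sets of size `t`
whose set of sums is a set of `n` consecutive integers. -/
theorem consecutive_tuple_sums_of_odd (t n : ℕ) (ht : 3 ≤ t) (htodd : Odd t)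
    (hn : 0 < n) (m : ℤ) :
    ∃ (P : Finset (Finset ℤ)) (a : ℤ),
      P.card = n ∧
      (∀ p ∈ P, p.card = t) ∧
      (∀ p ∈ P, ∀ q ∈ P, p ≠ q → Disjoint p q) ∧
      P.biUnion id = Finset.Icc m (m + (t : ℤ) * (n : ℤ) - 1) ∧
      P.image (fun p => p.sum id) = Finset.Icc a (a + (n : ℤ) - 1) :=
  consecutive_tuple_sums_of_odd_general t n htodd m
end

section
/- For every even integer t ≥ 2, every odd positive integer n, and every integer m, the set of tn consecutive integers {m, m+1, ..., m+tn−1} can be partitioned into n pairwise disjoint t-element subsets such that the set of the n subset sums consists of n consecutive integers a, a+1, ..., a+n−1 for some integer a. -/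
namespace ConsecAux

/-- auxiliary permutation of `{0,...,2u}` -/
def gg (u i : ℕ) : ℕ := if i % 2 = 0 then u - i / 2 else 2 * u - i / 2

/-- the `j`-th element of the `i`-th part (shifted by `m`), for `t = 2k`, `n = 2u+1`. -/
def ee (k u : ℕ) (m : ℤ) (i j : ℕ) : ℤ :=
  m + ((j * (2 * u + 1) : ℕ) : ℤ) +
    (if j = 2 * k - 1 then ((gg u i : ℕ) : ℤ)
     else if j % 2 = 0 then (i : ℤ) else 2 * (u : ℤ) - (i : ℤ))

lemma ee_bounds (k u : ℕ) (m : ℤ) {i : ℕ} (j : ℕ) (hi : i < 2 * u + 1) :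
    m + ((j * (2 * u + 1) : ℕ) : ℤ) ≤ ee k u m i j ∧
    ee k u m i j ≤ m + ((j * (2 * u + 1) : ℕ) : ℤ) + 2 * u := by
  have hg : gg u i ≤ 2 * u := by simp only [gg]; split_ifs <;> omega
  simp only [ee]; split_ifs <;> omega

lemma block_mono (u : ℕ) {j j' : ℕ} (h : j < j') :
    j * (2 * u + 1) + 2 * u < j' * (2 * u + 1) := by
  have h1 : (j + 1) * (2 * u + 1) ≤ j' * (2 * u + 1) :=
    Nat.mul_le_mul_right _ h
  have h2 : (j + 1) * (2 * u + 1) = j * (2 * u + 1) + (2 * u + 1) := by ring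
  omega

lemma ee_inj (k u : ℕ) (m : ℤ) {i i' j j' : ℕ} (hi : i < 2 * u + 1)
    (hi' : i' < 2 * u + 1) (h : ee k u m i j = ee k u m i' j') : i = i' ∧ j = j' := by
  obtain ⟨b1, b2⟩ := ee_bounds k u m j hi
  obtain ⟨b1', b2'⟩ := ee_bounds k u m j' hi'
  have hjj : j = j' := by
    by_contra hne
    rcases Nat.lt_or_ge j j' with hlt | hge
    · have := block_mono u hlt; omega
    · have hlt : j' < j := by omega
      have := block_mono u hlt; omega
  subst hjj
  refine ⟨?_, rfl⟩
  simp only [ee, gg] at h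
  split_ifs at h <;> omega

lemma ee_surj (k u : ℕ) (m : ℤ) {j r : ℕ} (hj : j < 2 * k) (hr : r < 2 * u + 1) :
    ∃ i < 2 * u + 1, ee k u m i j = m + ((j * (2 * u + 1) : ℕ) : ℤ) + r := by
  by_cases hlast : j = 2 * k - 1
  · by_cases hru : r ≤ u
    · exact ⟨2 * (u - r), by omega, by simp only [ee, gg]; split_ifs <;> omega⟩
    · exact ⟨2 * (2 * u - r) + 1, by omega, by simp only [ee, gg]; split_ifs <;> omega⟩
  · by_cases hpar : j % 2 = 0
    · exact ⟨r, hr, by simp only [ee]; split_ifs <;> omega⟩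
    · exact ⟨2 * u - r, by omega, by simp only [ee]; split_ifs <;> omega⟩

lemma sum_range_two_mul (f : ℕ → ℤ) (k : ℕ) :
    ∑ j ∈ Finset.range (2 * k), f j = ∑ b ∈ Finset.range k, (f (2 * b) + f (2 * b + 1)) := by
  induction k with
  | zero => simp
  | succ k ih =>
      have h : 2 * (k + 1) = (2 * k + 1) + 1 := by ring
      rw [h, Finset.sum_range_succ, Finset.sum_range_succ, ih, Finset.sum_range_succ]
      ring

/-- the constant part of the sum of the `i`-th part -/
def CC (k' u : ℕ) (m : ℤ) : ℤ :=
  (∑ b ∈ Finset.range k',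
      (2 * m + ((2 * b * (2 * u + 1) : ℕ) : ℤ) + (((2 * b + 1) * (2 * u + 1) : ℕ) : ℤ)
        + 2 * (u : ℤ)))
  + 2 * m + ((2 * k' * (2 * u + 1) : ℕ) : ℤ) + (((2 * k' + 1) * (2 * u + 1) : ℕ) : ℤ)

lemma sum_ee (k' u : ℕ) (m : ℤ) (i : ℕ) (hi : i < 2 * u + 1) :
    ∑ j ∈ Finset.range (2 * (k' + 1)), ee (k' + 1) u m i j
      = CC k' u m + (i : ℤ) + ((gg u i : ℕ) : ℤ) := by
  rw [sum_range_two_mul, Finset.sum_range_succ]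
  have hmain : ∀ b ∈ Finset.range k',
      ee (k' + 1) u m i (2 * b) + ee (k' + 1) u m i (2 * b + 1)
        = 2 * m + ((2 * b * (2 * u + 1) : ℕ) : ℤ) + (((2 * b + 1) * (2 * u + 1) : ℕ) : ℤ)
            + 2 * (u : ℤ) := by
    intro b hb
    rw [Finset.mem_range] at hb
    simp only [ee]
    split_ifs <;> omega
  rw [Finset.sum_congr rfl hmain]
  have h1 : ee (k' + 1) u m i (2 * k') = m + ((2 * k' * (2 * u + 1) : ℕ) : ℤ) + (i : ℤ) := by
    simp only [ee]; split_ifs <;> omega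
  have h2 : ee (k' + 1) u m i (2 * k' + 1)
      = m + (((2 * k' + 1) * (2 * u + 1) : ℕ) : ℤ) + ((gg u i : ℕ) : ℤ) := by
    simp only [ee]
    rw [show 2 * (k' + 1) - 1 = 2 * k' + 1 from by omega]
    rw [if_pos rfl]
  rw [h1, h2, CC]
  ring

end ConsecAux

open ConsecAux in
/-- For every even `t ≥ 2`, every odd positive `n` and every integer `m`, the set of
`t*n` consecutive integers `{m, ..., m+t*n-1}` can be partitioned into `n` sets of size
`t` whose set of sums is a set of `n` consecutive integers. -/
theorem consecutive_tuple_sums_of_even_odd (t n : ℕ) (ht : 2 ≤ t) (hteven : Even t)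
    (hn : 0 < n) (hnodd : Odd n) (m : ℤ) :
    ∃ (P : Finset (Finset ℤ)) (a : ℤ),
      P.card = n ∧
      (∀ p ∈ P, p.card = t) ∧
      (∀ p ∈ P, ∀ q ∈ P, p ≠ q → Disjoint p q) ∧
      P.biUnion id = Finset.Icc m (m + (t : ℤ) * (n : ℤ) - 1) ∧
      P.image (fun p => p.sum id) = Finset.Icc a (a + (n : ℤ) - 1) := by
  obtain ⟨u, rfl⟩ := hnodd
  obtain ⟨c, rfl⟩ := hteven
  obtain ⟨k', rfl⟩ : ∃ k'', c = k'' + 1 := ⟨c - 1, by omega⟩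
  rw [show (k' + 1) + (k' + 1) = 2 * (k' + 1) from by ring]
  refine ⟨(Finset.range (2 * u + 1)).image
      (fun i => (Finset.range (2 * (k' + 1))).image (ee (k' + 1) u m i)),
    CC k' u m + (u : ℤ), ?_, ?_, ?_, ?_, ?_⟩
  · rw [Finset.card_image_of_injOn, Finset.card_range]
    intro i hi i' hi' h
    simp only [Finset.coe_range, Set.mem_Iio] at hi hi'
    simp only [] at h
    have h0 : ee (k' + 1) u m i 0 ∈
        (Finset.range (2 * (k' + 1))).image (ee (k' + 1) u m i') := by
      rw [← h]
      exact Finset.mem_image_of_mem _ (Finset.mem_range.mpr (by omega))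
    obtain ⟨j', hj', hee⟩ := Finset.mem_image.mp h0
    exact ((ee_inj (k' + 1) u m hi' hi hee).1).symm
  · intro p hp
    obtain ⟨i, hi, rfl⟩ := Finset.mem_image.mp hp
    rw [Finset.mem_range] at hi
    rw [Finset.card_image_of_injOn, Finset.card_range]
    intro j hj j' hj' h
    exact (ee_inj (k' + 1) u m hi hi h).2
  · intro p hp q hq hne
    obtain ⟨i, hi, rfl⟩ := Finset.mem_image.mp hp
    obtain ⟨i2, hi2, rfl⟩ := Finset.mem_image.mp hq
    rw [Finset.mem_range] at hi hi2
    rw [Finset.disjoint_left]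
    intro x hx hx2
    obtain ⟨j, hj, rfl⟩ := Finset.mem_image.mp hx
    obtain ⟨j2, hj2, heq⟩ := Finset.mem_image.mp hx2
    obtain ⟨h1, -⟩ := ee_inj (k' + 1) u m hi2 hi heq
    subst h1
    exact hne rfl
  · rw [show ((2 * (k' + 1) : ℕ) : ℤ) * ((2 * u + 1 : ℕ) : ℤ)
        = ((2 * (k' + 1) * (2 * u + 1) : ℕ) : ℤ) from by push_cast; ring]
    ext x
    simp only [Finset.mem_biUnion, Finset.mem_image, Finset.mem_range, Finset.mem_Icc, id]
    constructor
    · rintro ⟨p, ⟨i, hi, rfl⟩, hx⟩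
      obtain ⟨j, hj, rfl⟩ := Finset.mem_image.mp hx
      rw [Finset.mem_range] at hj
      obtain ⟨b1, b2⟩ := ee_bounds (k' + 1) u m j hi
      have hle : (j + 1) * (2 * u + 1) ≤ 2 * (k' + 1) * (2 * u + 1) :=
        Nat.mul_le_mul_right _ (by omega)
      have hsm : (j + 1) * (2 * u + 1) = j * (2 * u + 1) + (2 * u + 1) := by ring
      omega
    · rintro ⟨h1, h2⟩
      set d := (x - m).toNat with hd
      have hdlt : d < 2 * (k' + 1) * (2 * u + 1) := by omega
      have hj : d / (2 * u + 1) < 2 * (k' + 1) :=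
        (Nat.div_lt_iff_lt_mul (by omega)).mpr hdlt
      have hr : d % (2 * u + 1) < 2 * u + 1 := Nat.mod_lt _ (by omega)
      have hdm : (2 * u + 1) * (d / (2 * u + 1)) + d % (2 * u + 1) = d :=
        Nat.div_add_mod d (2 * u + 1)
      obtain ⟨i, hi, hee⟩ := ee_surj (k' + 1) u m hj hr
      refine ⟨_, ⟨i, hi, rfl⟩, Finset.mem_image.mpr ⟨_, Finset.mem_range.mpr hj, ?_⟩⟩
      rw [hee]
      have hc : (d / (2 * u + 1)) * (2 * u + 1) = (2 * u + 1) * (d / (2 * u + 1)) :=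
        Nat.mul_comm _ _
      omega
  · rw [Finset.image_image]
    rw [Finset.image_congr (g := fun i : ℕ => CC k' u m + (i : ℤ) + ((gg u i : ℕ) : ℤ))
      (by
        intro i hi
        simp only [Finset.coe_range, Set.mem_Iio] at hi
        simp only [Function.comp]
        rw [Finset.sum_image (by
          intro j hj j' hj' h
          exact (ee_inj (k' + 1) u m hi hi h).2)]
        simpa [id] using sum_ee k' u m i hi)]
    ext x
    simp only [Finset.mem_image, Finset.mem_range, Finset.mem_Icc]
    constructor
    · rintro ⟨i, hi, rfl⟩
      have hg : u ≤ i + gg u i ∧ i + gg u i ≤ 3 * u := by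
        simp only [gg]; split_ifs <;> omega
      omega
    · rintro ⟨hx1, hx2⟩
      set r := (x - CC k' u m).toNat with hr
      refine ⟨if r ≤ 2 * u then 2 * (r - u) else 2 * (r - (2 * u + 1)) + 1, ?_, ?_⟩
      · split_ifs <;> omega
      · simp only [gg]
        split_ifs <;> omega
end

section
/- For every even integer t ≥ 2, every even positive integer n, and every integer m, the set of tn consecutive integers {m, m+1, ..., m+tn−1} can be partitioned into n pairwise disjoint t-element subsets such that the multiset of the n subset sums consists of n−1 consecutive integers a, a+1, ..., a+n−2 for some integer a, together with one additional value not in {a, ..., a+n−2}. -/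
/-- Column value of the element of block `j` in row `r`. -/
private def colv (n : ℤ) (r : ℕ) (j : ℤ) : ℤ :=
  if r = 0 then (if j = 0 then 0 else if j ≤ n / 2 then 2 * j - 1 else 2 * j - n)
  else if r = 1 then (if j = 0 then 0 else if j ≤ n / 2 then n / 2 + 1 - j else 3 * (n / 2) - j)
  else if r % 2 = 0 then j else n - 1 - j

private lemma colv_bounds (n : ℤ) (r : ℕ) (j : ℤ) (hn : 2 ≤ n) (hne : n % 2 = 0)
    (hj0 : 0 ≤ j) (hj1 : j ≤ n - 1) : 0 ≤ colv n r j ∧ colv n r j ≤ n - 1 := by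
  unfold colv; split_ifs <;> omega

private lemma colv_inj (n : ℤ) (r : ℕ) (j j' : ℤ) (hn : 2 ≤ n) (hne : n % 2 = 0)
    (hj0 : 0 ≤ j) (hj1 : j ≤ n - 1) (hj0' : 0 ≤ j') (hj1' : j' ≤ n - 1)
    (h : colv n r j = colv n r j') : j = j' := by
  unfold colv at h; split_ifs at h <;> omega

private lemma colv_sum01 (n : ℤ) (j : ℤ) (hn : 2 ≤ n) (hne : n % 2 = 0)
    (hj0 : 0 ≤ j) (hj1 : j ≤ n - 1) :
    colv n 0 j + colv n 1 j = if j = 0 then 0 else n / 2 + j := by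
  unfold colv; norm_num; split_ifs <;> omega

private def eltZ (m n : ℤ) (j : ℤ) (r : ℕ) : ℤ := m + r * n + colv n r j

private lemma eltZ_inj (m n : ℤ) (hn : 2 ≤ n) (hne : n % 2 = 0)
    (r r' : ℕ) (j j' : ℤ) (hj0 : 0 ≤ j) (hj1 : j ≤ n - 1) (hj0' : 0 ≤ j') (hj1' : j' ≤ n - 1)
    (h : eltZ m n j r = eltZ m n j' r') : r = r' ∧ j = j' := by
  have b1 := colv_bounds n r j hn hne hj0 hj1
  have b2 := colv_bounds n r' j' hn hne hj0' hj1'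
  unfold eltZ at h
  have hr : r = r' := by
    by_contra hrr
    rcases Nat.lt_or_ge r r' with hlt | hge
    · have h1 : (r : ℤ) + 1 ≤ (r' : ℤ) := by exact_mod_cast hlt
      have key : n ≤ ((r' : ℤ) - r) * n := le_mul_of_one_le_left (by linarith) (by linarith)
      have key2 : ((r' : ℤ) - r) * n = (r' : ℤ) * n - (r : ℤ) * n := by ring
      linarith [b1.1, b1.2, b2.1, b2.2]
    · have hlt : r' < r := lt_of_le_of_ne hge (Ne.symm hrr)
      have h1 : (r' : ℤ) + 1 ≤ (r : ℤ) := by exact_mod_cast hlt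
      have key : n ≤ ((r : ℤ) - r') * n := le_mul_of_one_le_left (by linarith) (by linarith)
      have key2 : ((r : ℤ) - r') * n = (r : ℤ) * n - (r' : ℤ) * n := by ring
      linarith [b1.1, b1.2, b2.1, b2.2]
  subst hr
  exact ⟨rfl, colv_inj n r j j' hn hne hj0 hj1 hj0' hj1' (by omega)⟩

private lemma colv_rowsum (n : ℤ) (j : ℤ) (hn : 2 ≤ n) (hne : n % 2 = 0)
    (u : ℕ) (hu : 1 ≤ u) :
    ∑ r ∈ Finset.range (2 * u), colv n r j
      = colv n 0 j + colv n 1 j + ((u : ℤ) - 1) * (n - 1) := by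
  induction u with
  | zero => omega
  | succ u ih =>
    rcases Nat.eq_zero_or_pos u with h0 | hpos
    · subst h0
      simp [Finset.sum_range_succ]
    · have e : 2 * (u + 1) = (2 * u) + 1 + 1 := by ring
      rw [e, Finset.sum_range_succ, Finset.sum_range_succ, ih hpos]
      have e1 : colv n (2 * u) j = j := by
        have h0' : ¬(2 * u = 0) := by omega
        have h1' : ¬(2 * u = 1) := by omega
        have h2' : (2 * u) % 2 = 0 := by omega
        simp only [colv, if_neg h0', if_neg h1', if_pos h2']
      have e2 : colv n (2 * u + 1) j = n - 1 - j := by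
        have h0' : ¬(2 * u + 1 = 0) := by omega
        have h1' : ¬(2 * u + 1 = 1) := by omega
        have h2' : ¬((2 * u + 1) % 2 = 0) := by omega
        simp only [colv, if_neg h0', if_neg h1', if_neg h2']
      rw [e1, e2]
      push_cast
      ring

private def Sj (m n : ℤ) (t : ℕ) (j : ℤ) : Finset ℤ := (Finset.range t).image (eltZ m n j)

private lemma Sj_card (m n : ℤ) (t : ℕ) (hn : 2 ≤ n) (hne : n % 2 = 0)
    (j : ℤ) (hj0 : 0 ≤ j) (hj1 : j ≤ n - 1) : (Sj m n t j).card = t := by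
  unfold Sj
  rw [Finset.card_image_of_injOn, Finset.card_range]
  intro r _ r' _ h
  exact (eltZ_inj m n hn hne r r' j j hj0 hj1 hj0 hj1 h).1

private lemma Sj_sum (m n : ℤ) (u : ℕ) (hu : 1 ≤ u) (hn : 2 ≤ n) (hne : n % 2 = 0)
    (j : ℤ) (hj0 : 0 ≤ j) (hj1 : j ≤ n - 1) :
    (Sj m n (2 * u) j).sum id
      = (∑ r ∈ Finset.range (2 * u), (m + (r : ℤ) * n)) + ((u : ℤ) - 1) * (n - 1)
        + (if j = 0 then 0 else n / 2 + j) := by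
  unfold Sj
  rw [Finset.sum_image (fun r _ r' _ h => (eltZ_inj m n hn hne r r' j j hj0 hj1 hj0 hj1 h).1)]
  have : ∀ r ∈ Finset.range (2 * u), id (eltZ m n j r) = (m + (r : ℤ) * n) + colv n r j :=
    fun _ _ => rfl
  rw [Finset.sum_congr rfl this, Finset.sum_add_distrib,
    colv_rowsum n j hn hne u hu, colv_sum01 n j hn hne hj0 hj1]
  ring

/-- For every even `t ≥ 2`, every even positive `n` and every integer `m`, the set of
`t*n` consecutive integers `{m, ..., m+t*n-1}` can be partitioned into `n` sets of size
`t` such that the multiset of the `n` sums consists of `n-1` consecutive integers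
together with one additional value outside this range. -/
theorem tuple_sums_of_even_even (t n : ℕ) (ht : 2 ≤ t) (hteven : Even t)
    (hn : 0 < n) (hneven : Even n) (m : ℤ) :
    ∃ (P : Finset (Finset ℤ)) (a b : ℤ),
      P.card = n ∧
      (∀ p ∈ P, p.card = t) ∧
      (∀ p ∈ P, ∀ q ∈ P, p ≠ q → Disjoint p q) ∧
      P.biUnion id = Finset.Icc m (m + (t : ℤ) * (n : ℤ) - 1) ∧
      P.val.map (fun p => p.sum id) = b ::ₘ (Finset.Icc a (a + (n : ℤ) - 2)).val ∧
      b ∉ Finset.Icc a (a + (n : ℤ) - 2) := by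
  obtain ⟨u, hu⟩ := hteven
  obtain ⟨v, hv⟩ := hneven
  have ht2u : t = 2 * u := by omega
  have hu1 : 1 ≤ u := by omega
  have hN2 : 2 ≤ (n : ℤ) := by omega
  have hNe : (n : ℤ) % 2 = 0 := by omega
  set J : Finset ℤ := Finset.Icc 0 ((n : ℤ) - 1) with hJ
  have hmemJ : ∀ j ∈ J, 0 ≤ j ∧ j ≤ (n : ℤ) - 1 := by
    intro j hj; rw [hJ, Finset.mem_Icc] at hj; exact hj
  set T : ℤ := (∑ r ∈ Finset.range (2 * u), (m + (r : ℤ) * (n : ℤ)))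
      + ((u : ℤ) - 1) * ((n : ℤ) - 1) with hT
  have hsum : ∀ j ∈ J,
      (Sj m (n : ℤ) t j).sum id = T + (if j = 0 then 0 else (n : ℤ) / 2 + j) := by
    intro j hj
    obtain ⟨h0, h1⟩ := hmemJ j hj
    rw [ht2u, Sj_sum m (n : ℤ) u hu1 hN2 hNe j h0 h1, hT]
  have hSinj : Set.InjOn (Sj m (n : ℤ) t) J := by
    intro j hj j' hj' h
    have e1 := hsum j hj
    have e2 := hsum j' hj'
    rw [h] at e1
    rw [e1] at e2
    obtain ⟨hj0, hj1⟩ := hmemJ j hj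
    obtain ⟨hj0', hj1'⟩ := hmemJ j' hj'
    split_ifs at e2 <;> omega
  set P : Finset (Finset ℤ) := J.image (Sj m (n : ℤ) t) with hP
  have hcardJ : J.card = n := by
    rw [hJ, Int.card_Icc]
    omega
  have hcardP : P.card = n := by
    rw [hP, Finset.card_image_of_injOn hSinj, hcardJ]
  have hmemS : ∀ j x, x ∈ Sj m (n : ℤ) t j ↔ ∃ r < t, x = eltZ m (n : ℤ) j r := by
    intro j x
    unfold Sj
    simp only [Finset.mem_image, Finset.mem_range]
    constructor
    · rintro ⟨r, hr, rfl⟩; exact ⟨r, hr, rfl⟩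
    · rintro ⟨r, hr, rfl⟩; exact ⟨r, hr, rfl⟩
  have hdisj : ∀ p ∈ P, ∀ q ∈ P, p ≠ q → Disjoint p q := by
    intro p hp q hq hpq
    rw [hP, Finset.mem_image] at hp hq
    obtain ⟨j, hj, rfl⟩ := hp
    obtain ⟨j', hj', rfl⟩ := hq
    have hjj' : j ≠ j' := fun h => hpq (by rw [h])
    rw [Finset.disjoint_left]
    intro x hx hx'
    rw [hmemS] at hx hx'
    obtain ⟨r, hr, rfl⟩ := hx
    obtain ⟨r', hr', he⟩ := hx'
    obtain ⟨hj0, hj1⟩ := hmemJ j hj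
    obtain ⟨hj0', hj1'⟩ := hmemJ j' hj'
    exact hjj' (eltZ_inj m (n : ℤ) hN2 hNe r r' j j' hj0 hj1 hj0' hj1' he).2
  have hcardp : ∀ p ∈ P, p.card = t := by
    intro p hp
    rw [hP, Finset.mem_image] at hp
    obtain ⟨j, hj, rfl⟩ := hp
    obtain ⟨hj0, hj1⟩ := hmemJ j hj
    exact Sj_card m (n : ℤ) t hN2 hNe j hj0 hj1
  have hbiU : P.biUnion id = Finset.Icc m (m + (t : ℤ) * (n : ℤ) - 1) := by
    apply Finset.eq_of_subset_of_card_le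
    · intro x hx
      rw [Finset.mem_biUnion] at hx
      obtain ⟨p, hp, hxp⟩ := hx
      rw [hP, Finset.mem_image] at hp
      obtain ⟨j, hj, rfl⟩ := hp
      rw [id] at hxp
      rw [hmemS] at hxp
      obtain ⟨r, hr, rfl⟩ := hxp
      obtain ⟨hj0, hj1⟩ := hmemJ j hj
      have hb := colv_bounds (n : ℤ) r j hN2 hNe hj0 hj1
      have hrt : (r : ℤ) ≤ (t : ℤ) - 1 := by
        have : (r : ℤ) + 1 ≤ (t : ℤ) := by exact_mod_cast hr
        linarith
      have hrn : (r : ℤ) * (n : ℤ) ≤ ((t : ℤ) - 1) * (n : ℤ) :=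
        mul_le_mul_of_nonneg_right hrt (by linarith)
      have hr0 : 0 ≤ (r : ℤ) * (n : ℤ) := mul_nonneg (by positivity) (by linarith)
      rw [Finset.mem_Icc]
      unfold eltZ
      constructor
      · linarith [hb.1]
      · nlinarith [hb.2]
    · have h1 : Finset.card (P.biUnion id) = n * t := by
        have hcb := Finset.card_biUnion (s := P) (t := id)
          (fun p hp q hq hpq => hdisj p hp q hq hpq)
        rw [hcb]
        calc ∑ p ∈ P, (id p).card = ∑ _p ∈ P, t :=
              Finset.sum_congr rfl (fun p hp => hcardp p hp)
          _ = n * t := by rw [Finset.sum_const, hcardP, smul_eq_mul]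
      rw [h1, Int.card_Icc]
      have e1 : m + (t : ℤ) * (n : ℤ) - 1 + 1 - m = ((t * n : ℕ) : ℤ) := by
        push_cast; ring
      rw [e1, Int.toNat_natCast]
      exact Nat.le_of_eq (Nat.mul_comm t n)
  refine ⟨P, T + (n : ℤ) / 2 + 1, T, hcardP, hcardp, hdisj, hbiU, ?_, ?_⟩
  · have hval : P.val = Multiset.map (Sj m (n : ℤ) t) J.val := by
      rw [hP]; exact Finset.image_val_of_injOn hSinj
    rw [hval, Multiset.map_map]
    have hcong : Multiset.map ((fun p => p.sum id) ∘ Sj m (n : ℤ) t) J.val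
        = Multiset.map (fun j => T + (if j = 0 then 0 else (n : ℤ) / 2 + j)) J.val := by
      apply Multiset.map_congr rfl
      intro j hj
      exact hsum j hj
    rw [hcong]
    have hJsplit : J = insert 0 (Finset.Icc 1 ((n : ℤ) - 1)) := by
      ext x
      simp only [hJ, Finset.mem_Icc, Finset.mem_insert]
      omega
    have h0nm : (0 : ℤ) ∉ Finset.Icc 1 ((n : ℤ) - 1) := by simp
    rw [hJsplit, Finset.insert_val_of_notMem h0nm, Multiset.map_cons]
    have e0 : T + (if (0 : ℤ) = 0 then 0 else (n : ℤ) / 2 + 0) = T := by norm_num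
    rw [e0]
    congr 1
    have hcong2 : Multiset.map (fun j => T + (if j = 0 then 0 else (n : ℤ) / 2 + j))
        (Finset.Icc (1:ℤ) ((n : ℤ) - 1)).val
        = Multiset.map (fun j => (T + (n : ℤ) / 2) + j) (Finset.Icc (1:ℤ) ((n : ℤ) - 1)).val := by
      apply Multiset.map_congr rfl
      intro j hj
      rw [← Finset.mem_def, Finset.mem_Icc] at hj
      have hne0 : j ≠ 0 := by omega
      rw [if_neg hne0]
      ring
    rw [hcong2]
    have hmap := Finset.map_add_left_Icc (1:ℤ) ((n : ℤ) - 1) (T + (n : ℤ) / 2)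
    have hv2 : (Finset.map (addLeftEmbedding (T + (n : ℤ) / 2)) (Finset.Icc 1 ((n : ℤ) - 1))).val
        = Multiset.map (fun j => (T + (n : ℤ) / 2) + j) (Finset.Icc (1:ℤ) ((n : ℤ) - 1)).val := by
      rw [Finset.map_val]
      rfl
    rw [← hv2, hmap]
    have e3 : T + (n : ℤ) / 2 + 1 + (n : ℤ) - 2 = T + (n : ℤ) / 2 + ((n : ℤ) - 1) := by ring
    rw [e3]
  · simp only [Finset.mem_Icc, not_and_or, not_le]
    left
    omega
end

section
/- Let t ≥ 2 be an integer and let T be the complete full t-ary tree of depth 2 (with l = t^2 leaves). Then the local antimagic chromatic number of T satisfies χ_la(T) ≤ l + 2. -/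
/-- The complete full `t`-ary tree of depth `n`, on vertex set
`Fin (1 + t + t² + ⋯ + tⁿ)` with heap-style indexing: the children of the vertex `u`
are the vertices `t*u + 1, t*u + 2, ..., t*u + t`. Vertex `0` is the root and the
vertices of index at least `1 + t + ⋯ + t^(n-1)` are the `tⁿ` leaves, all at depth
`n`. -/
def completeFullTaryTree (t n : ℕ) :
    SimpleGraph (Fin (∑ i ∈ Finset.range (n + 1), t ^ i)) where
  Adj u v := ∃ j : Fin t,
    v.val = t * u.val + 1 + j.val ∨ u.val = t * v.val + 1 + j.val
  symm := by
    constructor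
    rintro u v ⟨j, h⟩
    exact ⟨j, h.symm⟩
  loopless := by
    constructor
    rintro v ⟨j, h⟩
    have hv : v.val ≤ t * v.val := Nat.le_mul_of_pos_left _ j.pos
    rcases h with h | h <;> omega

instance (t n : ℕ) : DecidableRel (completeFullTaryTree t n).Adj := by
  unfold completeFullTaryTree
  intro u v
  exact inferInstanceAs (Decidable (∃ j : Fin t, _ ∨ _))

/-- The finset of edges of `G` incident to the vertex `v`. -/
def SimpleGraph.incidentEdgeFinset {V : Type*} [Fintype V] [DecidableEq V]
    (G : SimpleGraph V) [DecidableRel G.Adj] (v : V) : Finset (Sym2 V) :=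
  G.edgeFinset.filter (fun e => v ∈ e)

/-- The vertex sum (induced color) at `v` of an edge labeling `f`. -/
def SimpleGraph.vertexSum {V : Type*} [Fintype V] [DecidableEq V]
    (G : SimpleGraph V) [DecidableRel G.Adj] (f : Sym2 V → ℤ) (v : V) : ℤ :=
  ∑ e ∈ G.incidentEdgeFinset v, f e

/-- `f` is a local antimagic labeling of `G`: it restricts to a bijection from the edge
set of `G` onto `{1, 2, ..., |E|}`, and adjacent vertices get distinct vertex sums. -/
def SimpleGraph.IsLocalAntimagicLabeling {V : Type*} [Fintype V] [DecidableEq V]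
    (G : SimpleGraph V) [DecidableRel G.Adj] (f : Sym2 V → ℤ) : Prop :=
  Set.BijOn f ↑G.edgeFinset (Set.Icc 1 (G.edgeFinset.card : ℤ)) ∧
  ∀ u v : V, G.Adj u v → G.vertexSum f u ≠ G.vertexSum f v

/-- The number of distinct vertex sums (colors) induced by the labeling `f`. -/
def SimpleGraph.sumColorCount {V : Type*} [Fintype V] [DecidableEq V]
    (G : SimpleGraph V) [DecidableRel G.Adj] (f : Sym2 V → ℤ) : ℕ :=
  (Finset.univ.image (G.vertexSum f)).card

/-- The local antimagic chromatic number of `G`: the least number of colors over all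
colorings induced by local antimagic labelings of `G`. -/
noncomputable def SimpleGraph.localAntimagicChromaticNumber {V : Type*} [Fintype V]
    [DecidableEq V] (G : SimpleGraph V) [DecidableRel G.Adj] : ℕ :=
  sInf {c | ∃ f : Sym2 V → ℤ, G.IsLocalAntimagicLabeling f ∧ G.sumColorCount f = c}

/-! Label the edge above every non-root vertex `c` by a number `g c`, so that a leaf's vertex sum
is its own label. With root edges `1, …, t` and leaf edges `t + 1, …, t² + t`, the root and the
leaves all have sums in `[t + 1, t² + t]`, which accounts for at most `t²` colours, while every
middle vertex has a larger sum. Grouping the leaves by their position `j` among their siblings and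
labelling the `j`-th children by the block `t + j t + [1, t]` in the order of a permutation `σ j`,
the sum at the middle vertex `i` is a constant plus `i + ∑ j, σ j i`. Taking the `σ j` to be
identities and reversals, and two special permutations when `t` is even, this takes at most two
values. -/

open Finset

theorem SimpleGraph.localAntimagicChromaticNumber_le_sumColorCount {V : Type*} [Fintype V]
    [DecidableEq V] {G : SimpleGraph V} [DecidableRel G.Adj] {f : Sym2 V → ℤ}
    (hf : G.IsLocalAntimagicLabeling f) :
    G.localAntimagicChromaticNumber ≤ G.sumColorCount f :=
  Nat.sInf_le ⟨f, hf, rfl⟩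

theorem Nat.sub_one_div_eq_iff {t u c : ℕ} (ht : 0 < t) :
    0 < c ∧ (c - 1) / t = u ↔ t * u < c ∧ c ≤ t * u + t := by
  rw [Nat.div_eq_iff ht, mul_comm u]
  omega

theorem Nat.eq_of_add_mul_eq_add_mul {t j j' s s' : ℕ} (hs : s < t) (hs' : s' < t)
    (h : s + t * j = s' + t * j') : s = s' ∧ j = j' := by
  have ht : 0 < t := hs.trans_le' (Nat.zero_le _)
  obtain ⟨hdiv, hmod⟩ := (Nat.div_mod_unique ht).mpr ⟨h, hs⟩
  obtain ⟨hdiv', hmod'⟩ := (Nat.div_mod_unique ht).mpr ⟨rfl, hs'⟩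
  exact ⟨hmod.symm.trans hmod', hdiv.symm.trans hdiv'⟩

def heapParent {N : ℕ} (t : ℕ) (c : Fin N) : Fin N :=
  ⟨(c - 1) / t, ((Nat.div_le_self _ _).trans (Nat.sub_le _ _)).trans_lt c.2⟩

@[simp]
theorem heapParent_val {N : ℕ} (t : ℕ) (c : Fin N) : (heapParent t c : ℕ) = (c - 1) / t := rfl

theorem heapParent_lt {N t : ℕ} {c : Fin N} (hc : 0 < (c : ℕ)) : heapParent t c < c := by
  rw [Fin.lt_def, heapParent_val]
  exact (Nat.div_le_self _ _).trans_lt (Nat.sub_lt hc one_pos)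

theorem injOn_mk_heapParent {N : ℕ} (t : ℕ) :
    Set.InjOn (fun c : Fin N => s(heapParent t c, c)) {c | 0 < (c : ℕ)} := by
  intro c hc c' hc' h
  rcases Sym2.eq_iff.mp h with ⟨-, h⟩ | ⟨hp, hp'⟩
  · exact h
  · have hc'c : c' < c := hp ▸ heapParent_lt hc
    have hcc' : c < c' := hp' ▸ heapParent_lt hc'
    exact absurd hc'c hcc'.asymm

/-- The edge between `c` and its parent gets the label `g c`: the parent has the smaller index. -/
def heapEdgeLabel {N : ℕ} (g : ℕ → ℕ) : Sym2 (Fin N) → ℤ :=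
  Sym2.lift ⟨fun a b => g (max a b : Fin N), fun a b => by simp only [max_comm]⟩

theorem heapEdgeLabel_mk_heapParent {N t : ℕ} (g : ℕ → ℕ) {c : Fin N} (hc : 0 < (c : ℕ)) :
    heapEdgeLabel g s(heapParent t c, c) = g c := by
  change (g (max (heapParent t c) c : Fin N) : ℤ) = g c
  rw [max_eq_right (heapParent_lt hc).le]

theorem Fin.bijOn_val_Icc (N : ℕ) :
    Set.BijOn (fun c : Fin N => (c : ℕ)) {c | 0 < (c : ℕ)} (Set.Icc 1 (N - 1)) := by
  refine ⟨fun c hc => ⟨hc, Nat.le_sub_one_of_lt c.2⟩, Fin.val_injective.injOn, ?_⟩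
  intro k ⟨hk1, hk2⟩
  exact ⟨⟨k, by omega⟩, show 0 < k by omega, rfl⟩

section CompleteFullTaryTree

variable {t n : ℕ}

theorem completeFullTaryTree_adj_iff (ht : 0 < t) {u v} :
    (completeFullTaryTree t n).Adj u v ↔
      (0 < (v : ℕ) ∧ heapParent t v = u) ∨ (0 < (u : ℕ) ∧ heapParent t u = v) := by
  have isChild : ∀ a b : ℕ,
      (∃ j : Fin t, b = t * a + 1 + j) ↔ 0 < b ∧ (b - 1) / t = a := by
    intro a b
    rw [Nat.sub_one_div_eq_iff ht]
    exact ⟨fun ⟨j, hj⟩ => by omega,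
      fun h => ⟨⟨b - (t * a + 1), by omega⟩, by rw [Fin.val_mk]; omega⟩⟩
  change (∃ j : Fin t, _ ∨ _) ↔ _
  simp only [exists_or, isChild, Fin.ext_iff, heapParent_val]

theorem completeFullTaryTree_edgeFinset (ht : 0 < t) :
    (completeFullTaryTree t n).edgeFinset =
      (univ.filter fun c : Fin _ => 0 < (c : ℕ)).image fun c => s(heapParent t c, c) := by
  ext e
  induction e using Sym2.ind with
  | _ u v =>
    simp only [SimpleGraph.mem_edgeFinset, SimpleGraph.mem_edgeSet,
      completeFullTaryTree_adj_iff ht, mem_image, mem_filter, mem_univ, true_and,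
      Sym2.eq_iff]
    constructor
    · rintro (⟨hv, rfl⟩ | ⟨hu, rfl⟩)
      · exact ⟨v, hv, Or.inl ⟨rfl, rfl⟩⟩
      · exact ⟨u, hu, Or.inr ⟨rfl, rfl⟩⟩
    · rintro ⟨c, hc, ⟨rfl, rfl⟩ | ⟨rfl, rfl⟩⟩
      · exact Or.inl ⟨hc, rfl⟩
      · exact Or.inr ⟨hc, rfl⟩

theorem completeFullTaryTree_card_edgeFinset (ht : 0 < t) :
    (completeFullTaryTree t n).edgeFinset.card = (∑ i ∈ range (n + 1), t ^ i) - 1 := by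
  rw [completeFullTaryTree_edgeFinset ht, card_image_of_injOn (by
    simpa using injOn_mk_heapParent t)]
  calc _ = #(Icc 1 ((∑ i ∈ range (n + 1), t ^ i) - 1)) :=
        Set.BijOn.finsetCard_eq (fun c : Fin _ => (c : ℕ)) (by simpa using Fin.bijOn_val_Icc _)
    _ = _ := by simp

theorem completeFullTaryTree_bijOn_heapEdgeLabel (ht : 0 < t) {g : ℕ → ℕ}
    (hg : Set.BijOn g (Set.Icc 1 (completeFullTaryTree t n).edgeFinset.card)
      (Set.Icc 1 (completeFullTaryTree t n).edgeFinset.card)) :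
    Set.BijOn (heapEdgeLabel g) (completeFullTaryTree t n).edgeSet
      (Set.Icc 1 ((completeFullTaryTree t n).edgeFinset.card : ℤ)) := by
  have hcast : ∀ m : ℕ,
      Set.BijOn (fun k : ℕ => (k : ℤ)) (Set.Icc 1 m) (Set.Icc 1 (m : ℤ)) :=
    fun m => by
      simpa [Nat.image_cast_int_Icc] using
        (Nat.cast_injective (R := ℤ)).injOn.bijOn_image (s := Set.Icc 1 m)
  rw [completeFullTaryTree_card_edgeFinset ht] at hg ⊢
  rw [← SimpleGraph.coe_edgeFinset, completeFullTaryTree_edgeFinset ht, coe_image,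
    ← Set.bijOn_comp_iff (by simpa using injOn_mk_heapParent t)]
  simp only [coe_filter, mem_univ, true_and]
  refine ((hcast _).comp (hg.comp (Fin.bijOn_val_Icc _))).congr fun c hc => ?_
  exact (heapEdgeLabel_mk_heapParent g hc).symm

theorem completeFullTaryTree_vertexSum_heapEdgeLabel (ht : 0 < t) (g : ℕ → ℕ)
    (v : Fin (∑ i ∈ range (n + 1), t ^ i)) :
    (completeFullTaryTree t n).vertexSum (heapEdgeLabel g) v =
      ((if (v : ℕ) = 0 then 0 else g v) +
        ∑ k ∈ (range (∑ i ∈ range (n + 1), t ^ i)).filter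
          (fun k => t * v < k ∧ k ≤ t * v + t), g k : ℕ) := by
  rw [SimpleGraph.vertexSum, SimpleGraph.incidentEdgeFinset, completeFullTaryTree_edgeFinset ht,
    filter_image, sum_image, sum_congr rfl fun c hc =>
      heapEdgeLabel_mk_heapParent g (mem_filter.mp (mem_filter.mp hc).1).2, ← Nat.cast_sum,
    Nat.cast_inj, filter_filter, sum_filter, sum_filter]
  simp only [Sym2.mem_iff, Fin.ext_iff, heapParent_val]
  rw [Fin.sum_univ_eq_sum_range (fun k => if 0 < k ∧ (v = (k - 1) / t ∨ v = k) then g k else 0)]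
  · have hroot := sum_ite_eq' (range (∑ i ∈ range (n + 1), t ^ i)) (v : ℕ)
      fun k => if k = 0 then 0 else g k
    rw [if_pos (mem_range.mpr v.2)] at hroot
    rw [← hroot, ← sum_add_distrib]
    refine sum_congr rfl fun k _ => ?_
    have hchild := Nat.sub_one_div_eq_iff (u := v) (c := k) ht
    have hdiv := Nat.div_le_self (k - 1) t
    split_ifs <;> omega
  · exact (injOn_mk_heapParent t).mono fun c hc => by simp_all

theorem sum_range_three_pow (t : ℕ) : ∑ i ∈ range (2 + 1), t ^ i = t * t + t + 1 := by
  simp only [sum_range_succ, sum_range_zero]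
  ring

theorem completeFullTaryTree_two_vertexSum_of_le (ht : 0 < t) (g : ℕ → ℕ)
    {v : Fin (∑ i ∈ range (2 + 1), t ^ i)} (hv : (v : ℕ) ≤ t) :
    (completeFullTaryTree t 2).vertexSum (heapEdgeLabel g) v =
      ((if (v : ℕ) = 0 then 0 else g v) + ∑ j ∈ range t, g (t * v + 1 + j) : ℕ) := by
  have hchildren : (range (∑ i ∈ range (2 + 1), t ^ i)).filter
      (fun k => t * v < k ∧ k ≤ t * v + t) = Ico (t * v + 1) (t * v + 1 + t) := by
    have := Nat.mul_le_mul_left t hv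
    ext k
    simp only [mem_filter, mem_range, mem_Ico, sum_range_three_pow]
    omega
  rw [completeFullTaryTree_vertexSum_heapEdgeLabel ht, hchildren, sum_Ico_eq_sum_range,
    Nat.add_sub_cancel_left]

theorem completeFullTaryTree_two_vertexSum_of_lt (ht : 0 < t) (g : ℕ → ℕ)
    {v : Fin (∑ i ∈ range (2 + 1), t ^ i)} (hv : t < (v : ℕ)) :
    (completeFullTaryTree t 2).vertexSum (heapEdgeLabel g) v = g v := by
  have hleaf : (range (∑ i ∈ range (2 + 1), t ^ i)).filter
      (fun k => t * v < k ∧ k ≤ t * v + t) = ∅ := by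
    have := Nat.mul_le_mul_left t (show t + 1 ≤ (v : ℕ) from hv)
    rw [mul_add, mul_one] at this
    ext k
    simp only [mem_filter, mem_range, sum_range_three_pow, notMem_empty, iff_false]
    omega
  rw [completeFullTaryTree_vertexSum_heapEdgeLabel ht, hleaf, sum_empty, if_neg (by omega),
    add_zero]

end CompleteFullTaryTree

/-- Root edges get `1, …, t`; the edge above `t * i + 1 + j`, the `j`-th child of the middle
vertex `i`, gets `t + j * t + σ j i`, so that the `j`-th children share the block
`t + j * t + [1, t]`. -/
def depthTwoLabel (t : ℕ) (σ : ℕ → ℕ → ℕ) (c : ℕ) : ℕ :=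
  if c ≤ t then c else t + (c - 1) % t * t + σ ((c - 1) % t) ((c - 1) / t)

section DepthTwoLabel

variable {t : ℕ} {σ : ℕ → ℕ → ℕ}

theorem depthTwoLabel_of_le {c : ℕ} (hc : c ≤ t) : depthTwoLabel t σ c = c := if_pos hc

theorem depthTwoLabel_mul_add_one_add {i j : ℕ} (hi : 1 ≤ i) (hj : j < t) :
    depthTwoLabel t σ (t * i + 1 + j) = t + j * t + σ j i := by
  have hti : t ≤ t * i := Nat.le_mul_of_pos_right t hi
  have hc : t * i + 1 + j - 1 = t * i + j := by omega
  rw [depthTwoLabel, if_neg (by omega), hc, Nat.mul_add_mod, Nat.mod_eq_of_lt hj,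
    Nat.mul_add_div (by omega), Nat.div_eq_of_lt hj, add_zero]

theorem exists_eq_mul_add_one_add {c : ℕ} (hc : t < c) (hc' : c ≤ t * t + t) :
    ∃ i j, 1 ≤ i ∧ i ≤ t ∧ j < t ∧ c = t * i + 1 + j := by
  have ht : 0 < t := Nat.pos_of_ne_zero (by rintro rfl; omega)
  refine ⟨(c - 1) / t, (c - 1) % t, ?_, ?_, Nat.mod_lt _ ht, ?_⟩
  · rw [Nat.one_le_div_iff ht]
    omega
  · rw [← Nat.lt_succ_iff, Nat.div_lt_iff_lt_mul ht, Nat.succ_mul]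
    omega
  · have := Nat.div_add_mod (c - 1) t
    omega

theorem depthTwoLabel_mul_add_one_add_mem
    (hσ : ∀ j < t, Set.BijOn (σ j) (Set.Icc 1 t) (Set.Icc 1 t))
    {i j : ℕ} (hi : 1 ≤ i) (hi' : i ≤ t) (hj : j < t) :
    t < depthTwoLabel t σ (t * i + 1 + j) ∧
      depthTwoLabel t σ (t * i + 1 + j) ≤ t * t + t := by
  obtain ⟨hσ₁, hσ₂⟩ := (hσ j hj).mapsTo ⟨hi, hi'⟩
  have : j * t + t ≤ t * t := by nlinarith
  rw [depthTwoLabel_mul_add_one_add hi hj]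
  omega

theorem bijOn_depthTwoLabel (hσ : ∀ j < t, Set.BijOn (σ j) (Set.Icc 1 t) (Set.Icc 1 t)) :
    Set.BijOn (depthTwoLabel t σ) (Set.Icc 1 (t * t + t)) (Set.Icc 1 (t * t + t)) := by
  have hcases : ∀ c ∈ Set.Icc 1 (t * t + t), c ≤ t ∨
      ∃ i j, 1 ≤ i ∧ i ≤ t ∧ j < t ∧ c = t * i + 1 + j := fun c ⟨_, hc⟩ =>
    (le_or_gt c t).imp id fun hct => exists_eq_mul_add_one_add hct hc
  refine ((Set.finite_Icc _ _).injOn_iff_bijOn_of_mapsTo ?_).mp ?_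
  · intro c hc
    obtain hct | ⟨i, j, hi, hi', hj, rfl⟩ := hcases c hc
    · rwa [depthTwoLabel_of_le hct]
    · have := depthTwoLabel_mul_add_one_add_mem hσ hi hi' hj
      exact ⟨by omega, this.2⟩
  · intro c hc c' hc' h
    obtain hct | ⟨i, j, hi, hi', hj, rfl⟩ := hcases c hc <;>
      obtain hct' | ⟨i', j', hi₂, hi₂', hj', rfl⟩ := hcases c' hc'
    · rwa [depthTwoLabel_of_le hct, depthTwoLabel_of_le hct'] at h
    · have := depthTwoLabel_mul_add_one_add_mem hσ hi₂ hi₂' hj'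
      rw [depthTwoLabel_of_le hct] at h
      omega
    · have := depthTwoLabel_mul_add_one_add_mem hσ hi hi' hj
      rw [depthTwoLabel_of_le hct'] at h
      omega
    · rw [depthTwoLabel_mul_add_one_add hi hj, depthTwoLabel_mul_add_one_add hi₂ hj'] at h
      obtain ⟨hσ₁, hσ₂⟩ := (hσ j hj).mapsTo ⟨hi, hi'⟩
      obtain ⟨hσ₁', hσ₂'⟩ := (hσ j' hj').mapsTo ⟨hi₂, hi₂'⟩
      obtain ⟨hs, rfl⟩ := Nat.eq_of_add_mul_eq_add_mul (t := t) (s := σ j i - 1)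
        (s' := σ j' i' - 1) (j := j) (j' := j') (by omega) (by omega)
        (by rw [mul_comm t j, mul_comm t j']; omega)
      rw [(hσ j hj).injOn ⟨hi, hi'⟩ ⟨hi₂, hi₂'⟩ (by omega)]

end DepthTwoLabel

/-- The summand `i` is the label of the edge from the root to the middle vertex `i`. -/
def rowSum (t : ℕ) (σ : ℕ → ℕ → ℕ) (i : ℕ) : ℕ := i + ∑ j ∈ range t, σ j i

section DepthTwoTree

variable {t : ℕ} {σ : ℕ → ℕ → ℕ}

theorem completeFullTaryTree_two_adj (ht : 0 < t) {u v : Fin (∑ i ∈ range (2 + 1), t ^ i)}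
    (huv : (completeFullTaryTree t 2).Adj u v) :
    (1 ≤ (u : ℕ) ∧ (u : ℕ) ≤ t ∧ ((v : ℕ) = 0 ∨ t < v)) ∨
      (1 ≤ (v : ℕ) ∧ (v : ℕ) ≤ t ∧ ((u : ℕ) = 0 ∨ t < u)) := by
  have hlevels : ∀ a b : Fin (∑ i ∈ range (2 + 1), t ^ i),
      0 < (b : ℕ) → heapParent t b = a →
        (1 ≤ (a : ℕ) ∧ (a : ℕ) ≤ t ∧ t < b) ∨
          ((a : ℕ) = 0 ∧ 1 ≤ (b : ℕ) ∧ (b : ℕ) ≤ t) := by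
    intro a b hb hab
    have hb' : (b : ℕ) < t * t + t + 1 := b.2.trans_eq (sum_range_three_pow t)
    obtain ⟨hab₁, hab₂⟩ := (Nat.sub_one_div_eq_iff ht).mp ⟨hb, congrArg Fin.val hab⟩
    rcases Nat.eq_zero_or_pos (a : ℕ) with ha | ha
    · rw [ha] at hab₂
      omega
    · have hta : t ≤ t * a := Nat.le_mul_of_pos_right t ha
      have hat : (a : ℕ) ≤ t := by
        by_contra! hat
        have := Nat.mul_le_mul_left t (Nat.succ_le_of_lt hat)
        rw [Nat.mul_succ] at this
        omega
      omega
  rcases (completeFullTaryTree_adj_iff ht).mp huv with ⟨hv, hvu⟩ | ⟨hu, huv⟩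
  · rcases hlevels u v hv hvu with h | h <;> omega
  · rcases hlevels v u hu huv with h | h <;> omega

theorem completeFullTaryTree_two_vertexSum_depthTwoLabel_of_middle (ht : 0 < t)
    {v : Fin (∑ i ∈ range (2 + 1), t ^ i)} (hv : 1 ≤ (v : ℕ)) (hv' : (v : ℕ) ≤ t) :
    (completeFullTaryTree t 2).vertexSum (heapEdgeLabel (depthTwoLabel t σ)) v =
      ((∑ j ∈ range t, (t + j * t) + rowSum t σ v : ℕ) : ℤ) := by
  rw [completeFullTaryTree_two_vertexSum_of_le ht _ hv', if_neg (by omega),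
    depthTwoLabel_of_le hv', sum_congr rfl fun j hj =>
      depthTwoLabel_mul_add_one_add hv (mem_range.mp hj), sum_add_distrib, rowSum]
  push_cast
  ring

theorem lt_sum_add_rowSum (hσ : ∀ j < t, Set.BijOn (σ j) (Set.Icc 1 t) (Set.Icc 1 t))
    {i : ℕ} (hi : 1 ≤ i) (hi' : i ≤ t) :
    t * t + t < ∑ j ∈ range t, (t + j * t) + rowSum t σ i := by
  have hblocks : t * t ≤ ∑ j ∈ range t, (t + j * t) := by
    simpa using
      card_nsmul_le_sum (range t) (fun j => t + j * t) t fun j _ => Nat.le_add_right _ _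
  have hperms : t ≤ ∑ j ∈ range t, σ j i := by
    simpa using card_nsmul_le_sum (range t) (σ · i) 1 fun j hj =>
      ((hσ j (mem_range.mp hj)).mapsTo ⟨hi, hi'⟩).1
  rw [rowSum]
  omega

theorem completeFullTaryTree_two_vertexSum_depthTwoLabel_mem_Icc (ht : 2 ≤ t)
    (hσ : ∀ j < t, Set.BijOn (σ j) (Set.Icc 1 t) (Set.Icc 1 t))
    {v : Fin (∑ i ∈ range (2 + 1), t ^ i)} (hv : (v : ℕ) = 0 ∨ t < v) :
    (completeFullTaryTree t 2).vertexSum (heapEdgeLabel (depthTwoLabel t σ)) v ∈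
      Icc ((t + 1 : ℕ) : ℤ) (t * t + t : ℕ) := by
  rw [mem_Icc]
  rcases hv with hv | hv
  · rw [completeFullTaryTree_two_vertexSum_of_le (by omega) _ (hv ▸ Nat.zero_le t), if_pos hv,
      hv, sum_congr rfl fun j hj => depthTwoLabel_of_le (by rw [mem_range] at hj; omega),
      sum_add_distrib, sum_const, card_range, smul_eq_mul]
    simp only [mul_zero, zero_add, mul_one, Nat.cast_le]
    have hgauss := sum_range_id_mul_two t
    have hlow : 2 * 1 ≤ t * (t - 1) := Nat.mul_le_mul ht (by omega)
    have hhigh : t * (t - 1) ≤ t * t := Nat.mul_le_mul_left t (Nat.sub_le t 1)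
    omega
  · have hv' : (v : ℕ) ≤ t * t + t := Nat.le_of_lt_succ (v.2.trans_eq (sum_range_three_pow t))
    obtain ⟨i, j, hi, hi', hj, hvij⟩ := exists_eq_mul_add_one_add hv hv'
    have := depthTwoLabel_mul_add_one_add_mem hσ hi hi' hj
    rw [completeFullTaryTree_two_vertexSum_of_lt (by omega) _ hv, hvij, Nat.cast_le, Nat.cast_le]
    omega

theorem completeFullTaryTree_two_isLocalAntimagicLabeling (ht : 2 ≤ t)
    (hσ : ∀ j < t, Set.BijOn (σ j) (Set.Icc 1 t) (Set.Icc 1 t)) :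
    (completeFullTaryTree t 2).IsLocalAntimagicLabeling (heapEdgeLabel (depthTwoLabel t σ)) := by
  have hcard : (completeFullTaryTree t 2).edgeFinset.card = t * t + t := by
    rw [completeFullTaryTree_card_edgeFinset (by omega), sum_range_three_pow, Nat.add_sub_cancel]
  refine ⟨?_, fun u v huv => ?_⟩
  · rw [SimpleGraph.coe_edgeFinset]
    exact completeFullTaryTree_bijOn_heapEdgeLabel (by omega) (hcard ▸ bijOn_depthTwoLabel hσ)
  · have hlt : ∀ a b : Fin (∑ i ∈ range (2 + 1), t ^ i),
        1 ≤ (a : ℕ) → (a : ℕ) ≤ t → ((b : ℕ) = 0 ∨ t < b) →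
        (completeFullTaryTree t 2).vertexSum (heapEdgeLabel (depthTwoLabel t σ)) b <
          (completeFullTaryTree t 2).vertexSum (heapEdgeLabel (depthTwoLabel t σ)) a := by
      intro a b ha ha' hb
      have hb := mem_Icc.mp (completeFullTaryTree_two_vertexSum_depthTwoLabel_mem_Icc ht hσ hb)
      rw [completeFullTaryTree_two_vertexSum_depthTwoLabel_of_middle (by omega) ha ha']
      exact hb.2.trans_lt (by exact_mod_cast lt_sum_add_rowSum hσ ha ha')
    rcases completeFullTaryTree_two_adj (by omega) huv with ⟨hu, hu', hv⟩ | ⟨hv, hv', hu⟩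
    · exact (hlt u v hu hu' hv).ne'
    · exact (hlt v u hv hv' hu).ne

theorem completeFullTaryTree_two_sumColorCount_le (ht : 2 ≤ t)
    (hσ : ∀ j < t, Set.BijOn (σ j) (Set.Icc 1 t) (Set.Icc 1 t)) :
    (completeFullTaryTree t 2).sumColorCount (heapEdgeLabel (depthTwoLabel t σ)) ≤
      t * t + #((Icc 1 t).image (rowSum t σ)) := by
  have hsub :
      univ.image ((completeFullTaryTree t 2).vertexSum (heapEdgeLabel (depthTwoLabel t σ))) ⊆
        Icc ((t + 1 : ℕ) : ℤ) (t * t + t : ℕ) ∪ ((Icc 1 t).image (rowSum t σ)).image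
          fun r => ((∑ j ∈ range t, (t + j * t) + r : ℕ) : ℤ) := by
    intro s hs
    obtain ⟨v, -, rfl⟩ := mem_image.mp hs
    by_cases hv : 1 ≤ (v : ℕ) ∧ (v : ℕ) ≤ t
    · rw [completeFullTaryTree_two_vertexSum_depthTwoLabel_of_middle (by omega) hv.1 hv.2]
      exact mem_union_right _ (mem_image_of_mem _ (mem_image_of_mem _ (mem_Icc.mpr hv)))
    · exact mem_union_left _
        (completeFullTaryTree_two_vertexSum_depthTwoLabel_mem_Icc ht hσ (by omega))
  calc _ ≤ _ := card_le_card hsub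
    _ ≤ _ := card_union_le _ _
    _ ≤ _ := add_le_add (by simp) card_image_le

end DepthTwoTree

def halfRotation (t i : ℕ) : ℕ := if i ≤ t / 2 then i + t / 2 else i - t / 2

def parityFold (t i : ℕ) : ℕ := if i ≤ t / 2 then t + 2 - 2 * i else 2 * t + 1 - 2 * i

/-- `(t - 1) / 2` identities followed by reversals `i ↦ t + 1 - i`, except that for even `t` the
last two are `parityFold` and `halfRotation`. Each reversal pairs off with an identity or with the
summand `i` of `rowSum` to a constant `t + 1`; for even `t` the unpaired
`i + parityFold t i + halfRotation t i` takes only two values. -/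
def balancedPerms (t j i : ℕ) : ℕ :=
  if j < (t - 1) / 2 then i
  else if j < t - 2 ∨ t % 2 = 1 then t + 1 - i
  else if j = t - 2 then parityFold t i
  else halfRotation t i

section BalancedPerms

variable {t : ℕ}

theorem bijOn_balancedPerms (j : ℕ) :
    Set.BijOn (balancedPerms t j) (Set.Icc 1 t) (Set.Icc 1 t) := by
  refine ((Set.finite_Icc 1 t).injOn_iff_bijOn_of_mapsTo ?_).mp ?_
  · rintro i ⟨hi, hi'⟩
    simp only [Set.mem_Icc, balancedPerms, parityFold, halfRotation]
    split_ifs <;> omega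
  · rintro i ⟨hi, hi'⟩ i' ⟨hi₂, hi₂'⟩ h
    simp only [balancedPerms, parityFold, halfRotation] at h
    split_ifs at h <;> omega

theorem rowSum_balancedPerms_of_odd (hodd : t % 2 = 1) {i : ℕ} (hi : i ≤ t) :
    rowSum t (balancedPerms t) i = (t + 1) / 2 * (t + 1) := by
  obtain ⟨a, rfl⟩ : ∃ a, t = a + (a + 1) := ⟨t / 2, by omega⟩
  have hid : ∀ j ∈ range a, balancedPerms (a + (a + 1)) j i = i := fun j hj =>
    if_pos (by rw [mem_range] at hj; omega)
  have hrev : ∀ j ∈ range (a + 1),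
      balancedPerms (a + (a + 1)) (a + j) i = a + (a + 1) + 1 - i :=
    fun j _ => by rw [balancedPerms, if_neg (by omega), if_pos (Or.inr hodd)]
  obtain ⟨r, hr⟩ : ∃ r, a + (a + 1) + 1 - i = r := ⟨_, rfl⟩
  rw [rowSum, sum_range_add, sum_congr rfl hid, sum_congr rfl hrev, sum_const, sum_const,
    card_range, card_range, smul_eq_mul, smul_eq_mul, hr,
    show (a + (a + 1) + 1) / 2 = a + 1 by omega]
  calc i + (a * i + (a + 1) * r) = (a + 1) * (i + r) := by ring
    _ = (a + 1) * (a + (a + 1) + 1) := by rw [← hr, Nat.add_sub_cancel' (by omega)]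

theorem rowSum_balancedPerms_of_even (heven : t % 2 = 0) (ht : 2 ≤ t) {i : ℕ} (hi : i ≤ t) :
    rowSum t (balancedPerms t) i =
      (t - 1) / 2 * (t + 1) + (i + parityFold t i + halfRotation t i) := by
  obtain ⟨a, rfl⟩ : ∃ a, t = a + a + 2 := ⟨t / 2 - 1, by omega⟩
  have hid : ∀ j ∈ range a, balancedPerms (a + a + 2) j i = i := fun j hj =>
    if_pos (by rw [mem_range] at hj; omega)
  have hrev : ∀ j ∈ range a, balancedPerms (a + a + 2) (a + j) i = a + a + 2 + 1 - i :=
    fun j hj => by rw [mem_range] at hj; rw [balancedPerms, if_neg (by omega), if_pos (by omega)]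
  have hfold : balancedPerms (a + a + 2) (a + a + 0) i = parityFold (a + a + 2) i := by
    rw [balancedPerms, if_neg (by omega), if_neg (by omega), if_pos (by omega)]
  have hrot : balancedPerms (a + a + 2) (a + a + 1) i = halfRotation (a + a + 2) i := by
    rw [balancedPerms, if_neg (by omega), if_neg (by omega), if_neg (by omega)]
  obtain ⟨r, hr⟩ : ∃ r, a + a + 2 + 1 - i = r := ⟨_, rfl⟩
  rw [rowSum, sum_range_add, sum_range_add, sum_congr rfl hid, sum_congr rfl hrev, sum_range_succ,
    sum_range_one, hfold, hrot, sum_const, sum_const, card_range, smul_eq_mul, smul_eq_mul, hr,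
    show (a + a + 2 - 1) / 2 = a by omega]
  have hir : i + r = a + a + 2 + 1 := by omega
  calc i + (a * i + a * r + (parityFold (a + a + 2) i + halfRotation (a + a + 2) i))
      = a * (i + r) + (i + parityFold (a + a + 2) i + halfRotation (a + a + 2) i) := by ring
    _ = _ := by rw [hir]

theorem card_image_rowSum_balancedPerms_le_two :
    #((Icc 1 t).image (rowSum t (balancedPerms t))) ≤ 2 := by
  refine (card_le_card ?_).trans
    (card_le_two (a := rowSum t (balancedPerms t) 1) (b := rowSum t (balancedPerms t) t))
  intro s hs
  obtain ⟨i, hi, rfl⟩ := mem_image.mp hs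
  rw [mem_Icc] at hi
  rw [mem_insert, mem_singleton]
  rcases Nat.mod_two_eq_zero_or_one t with heven | hodd
  · rw [rowSum_balancedPerms_of_even heven (by omega) hi.2,
      rowSum_balancedPerms_of_even heven (by omega) le_rfl,
      rowSum_balancedPerms_of_even heven (by omega) (by omega : 1 ≤ t)]
    simp only [parityFold, halfRotation]
    split_ifs <;> omega
  · left
    rw [rowSum_balancedPerms_of_odd hodd hi.2, rowSum_balancedPerms_of_odd hodd (by omega)]

end BalancedPerms

/-- For every `t ≥ 2`, the local antimagic chromatic number of the complete full
`t`-ary tree of depth `2` is at most `l + 2`, where `l = t²` is its number of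
leaves. -/
theorem localAntimagicChromaticNumber_completeFullTaryTree_depth_two
    (t : ℕ) (ht : 2 ≤ t) :
    (completeFullTaryTree t 2).localAntimagicChromaticNumber ≤ t ^ 2 + 2 := by
  have hσ : ∀ j < t, Set.BijOn (balancedPerms t j) (Set.Icc 1 t) (Set.Icc 1 t) :=
    fun j _ => bijOn_balancedPerms j
  calc (completeFullTaryTree t 2).localAntimagicChromaticNumber
      ≤ (completeFullTaryTree t 2).sumColorCount
          (heapEdgeLabel (depthTwoLabel t (balancedPerms t))) :=
        SimpleGraph.localAntimagicChromaticNumber_le_sumColorCount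
          (completeFullTaryTree_two_isLocalAntimagicLabeling ht hσ)
    _ ≤ t * t + #((Icc 1 t).image (rowSum t (balancedPerms t))) :=
        completeFullTaryTree_two_sumColorCount_le ht hσ
    _ ≤ t ^ 2 + 2 := by
        rw [sq]
        exact Nat.add_le_add_left card_image_rowSum_balancedPerms_le_two _
end
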